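/- arXiv:2308.11163 — 3 statements merged into one kernel-verified Lean document; each statement's English description precedes it below -/
import Mathlib

section
/- For D ∈ D(C) as above, V^s(D) = { x ∈ W^s(C) : liminf_{i→∞} d(f^i(x), f^i(D)) = 0 }. -/
open Filter Topology Metric Set

variable {X : Type*} [MetricSpace X]

/-- There is a `δ`-chain of `f` from `x` to `y`. -/
def ChainReach (f : X → X) (δ : ℝ) (x y : X) : Prop :=
  ∃ k : ℕ, 0 < k ∧ ∃ c : ℕ → X, c 0 = x ∧ c k = y ∧
    ∀ i < k, dist (f (c i)) (c (i + 1)) ≤ δ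

/-- `x → y` : for every `δ > 0` there is a `δ`-chain from `x` to `y`. -/
def ChainTo (f : X → X) (x y : X) : Prop := ∀ δ > 0, ChainReach f δ x y

/-- The chain recurrent set. -/
def CR (f : X → X) : Set X := {x | ChainTo f x x}

/-- The relation `x ↔ y`. -/
def ChainRel (f : X → X) (x y : X) : Prop := ChainTo f x y ∧ ChainTo f y x

/-- A chain component: an equivalence class of `↔` on `CR f`. -/
def IsChainComponent (f : X → X) (C : Set X) : Prop :=
  ∃ x ∈ CR f, C = {y | y ∈ CR f ∧ ChainRel f x y}

/-- A `δ`-chain of `f` from `x` to `y` of length `k`, all of whose points lie in `S`. -/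
def ChainInLen (f : X → X) (S : Set X) (δ : ℝ) (x y : X) (k : ℕ) : Prop :=
  0 < k ∧ ∃ c : ℕ → X, (∀ i ≤ k, c i ∈ S) ∧ c 0 = x ∧ c k = y ∧
    ∀ i < k, dist (f (c i)) (c (i + 1)) ≤ δ

/-- There is a `δ`-chain from `x` to `y` inside `S`. -/
def ChainInReach (f : X → X) (S : Set X) (δ : ℝ) (x y : X) : Prop :=
  ∃ k, ChainInLen f S δ x y k

/-- `f` restricted to `S` is chain transitive. -/
def ChainTransitiveOn (f : X → X) (S : Set X) : Prop :=
  ∀ x ∈ S, ∀ y ∈ S, ∀ δ > 0, ChainInReach f S δ x y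

/-- The set of lengths of `δ`-cycles of `f` restricted to `C`. -/
def cycLengths (f : X → X) (C : Set X) (δ : ℝ) : Set ℕ :=
  {k | ∃ x ∈ C, ChainInLen f C δ x x k}

/-- The relation `∼_{C,δ}` : there is a `δ`-chain in `C` from `x` to `y` whose
length is divisible by the gcd `m(C,δ)` of all `δ`-cycle lengths (divisibility by
the gcd is expressed via common divisors). -/
def relCdelta (f : X → X) (C : Set X) (δ : ℝ) (x y : X) : Prop :=
  ∃ k : ℕ, (∀ d : ℕ, (∀ l ∈ cycLengths f C δ, d ∣ l) → d ∣ k) ∧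
    ChainInLen f C δ x y k

/-- The chain proximal relation `∼_C`. -/
def relC (f : X → X) (C : Set X) (x y : X) : Prop := ∀ δ > 0, relCdelta f C δ x y

/-- The class of `∼_{C,δ}` containing `x`. -/
def classCdelta (f : X → X) (C : Set X) (δ : ℝ) (x : X) : Set X :=
  {y | y ∈ C ∧ relCdelta f C δ x y}

/-- The class of `∼_C` containing `x`. -/
def classC (f : X → X) (C : Set X) (x : X) : Set X :=
  {y | y ∈ C ∧ relC f C x y}

/-- The basin of attraction of a set. -/
def basin (f : X → X) (C : Set X) : Set X :=
  {x | Tendsto (fun i => infDist (f^[i] x) C) atTop (𝓝 0)}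

/-- `V^s(D)` for the class `D` of `∼_C` containing the point `x ∈ C`. -/
def Vs (f : X → X) (C : Set X) (x : X) : Set X :=
  {z | z ∈ basin f C ∧ ∀ δ > 0,
    Tendsto (fun i => infDist (f^[i] z) (f^[i] '' classCdelta f C δ x)) atTop (𝓝 0)}


section chains

variable {f : X → X} {S : Set X} {δ δ' η : ℝ} {a a' b b' e : X} {k l : ℕ}

lemma ChainInLen.mono (hδ : δ ≤ δ') (h : ChainInLen f S δ a b k) : ChainInLen f S δ' a b k := by
  obtain ⟨hk, c, hm, h0, hl, hj⟩ := h
  exact ⟨hk, c, hm, h0, hl, fun i hi => (hj i hi).trans hδ⟩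

lemma ChainInLen.concat (h1 : ChainInLen f S δ a b k) (h2 : ChainInLen f S δ b e l) :
    ChainInLen f S δ a e (k + l) := by
  obtain ⟨hk, c, hm, h0, hke, hj⟩ := h1
  obtain ⟨hl, c', hm', h0', hle, hj'⟩ := h2
  refine ⟨by omega, fun i => if i ≤ k then c i else c' (i - k), ?_, ?_, ?_, ?_⟩
  · intro i hi
    by_cases hik : i ≤ k
    · simpa [hik] using hm i hik
    · simp only [hik, if_false]
      exact hm' (i - k) (by omega)
  · simp [h0]
  · by_cases hlk : l = 0
    · omega
    · have : ¬ (k + l ≤ k) := by omega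
      simp only [this, if_false]
      rw [show k + l - k = l by omega, hle]
  · intro i hi
    by_cases hik : i + 1 ≤ k
    · have hik' : i ≤ k := by omega
      simpa [hik, hik'] using hj i (by omega)
    · by_cases hik2 : i ≤ k
      · have hik3 : i = k := by omega
        simp only [hik2, if_true, hik, if_false]
        have h2 := hj' 0 (by omega)
        rw [h0'] at h2
        rw [hik3, show k + 1 - k = 1 by omega, hke]
        simpa using h2
      · simp only [hik2, if_false, hik, if_false]
        have : i + 1 - k = (i - k) + 1 := by omega
        rw [this]
        exact hj' (i - k) (by omega)

lemma ChainInLen.adjust_end (hb' : b' ∈ S) (hd : dist b b' ≤ η)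
    (h : ChainInLen f S δ a b k) : ChainInLen f S (δ + η) a b' k := by
  obtain ⟨hk, c, hm, h0, hl, hj⟩ := h
  refine ⟨hk, fun i => if i = k then b' else c i, ?_, ?_, ?_, ?_⟩
  · intro i hi
    by_cases hik : i = k
    · simpa [hik] using hb'
    · simpa [hik] using hm i hi
  · have : (0:ℕ) ≠ k := by omega
    simp [this, h0]
  · simp
  · intro i hi
    have hik : i ≠ k := by omega
    by_cases hik1 : i + 1 = k
    · simp only [hik, if_false, hik1, if_true]
      have h2 := hj i hi
      rw [hik1, hl] at h2
      calc dist (f (c i)) b' ≤ dist (f (c i)) b + dist b b' := dist_triangle _ _ _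
        _ ≤ δ + η := add_le_add h2 hd
    · simp only [hik, if_false, hik1, if_false]
      have : 0 ≤ η := le_trans dist_nonneg hd
      linarith [hj i hi]

lemma ChainInLen.adjust_start (ha' : a' ∈ S) (hd : dist (f a') (f a) ≤ η)
    (h : ChainInLen f S δ a b k) : ChainInLen f S (δ + η) a' b k := by
  obtain ⟨hk, c, hm, h0, hl, hj⟩ := h
  refine ⟨hk, fun i => if i = 0 then a' else c i, ?_, ?_, ?_, ?_⟩
  · intro i hi
    by_cases hik : i = 0
    · simpa [hik] using ha'
    · simpa [hik] using hm i hi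
  · simp
  · have : k ≠ 0 := by omega
    simp [this, hl]
  · intro i hi
    by_cases hi0 : i = 0
    · subst hi0
      have h1 : (1:ℕ) ≠ 0 := by omega
      simp only [if_true, h1, if_false]
      have h2 := hj 0 hi
      rw [h0] at h2
      calc dist (f a') (c 1) ≤ dist (f a') (f a) + dist (f a) (c 1) := dist_triangle _ _ _
        _ ≤ η + δ := add_le_add hd h2
        _ = δ + η := by ring
    · have hi1 : i + 1 ≠ 0 := by omega
      simp only [hi0, if_false, hi1, if_false]
      have : 0 ≤ η := le_trans dist_nonneg hd
      linarith [hj i hi]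

lemma chainInLen_orbit (hmap : MapsTo f S S) (ha : a ∈ S) (hδ : 0 ≤ δ) (hk : 0 < k) :
    ChainInLen f S δ a (f^[k] a) k := by
  have hit : ∀ n : ℕ, f^[n] a ∈ S := by
    intro n
    induction n with
    | zero => simpa using ha
    | succ n ih => rw [Function.iterate_succ_apply']; exact hmap ih
  refine ⟨hk, fun i => f^[i] a, fun i _ => hit i, rfl, rfl, ?_⟩
  intro i _
  show dist (f (f^[i] a)) (f^[i+1] a) ≤ δ
  rw [Function.iterate_succ_apply']
  simpa using hδ

omit [MetricSpace X] in
lemma iterate_mem_of_mapsTo (hmap : MapsTo f S S) (ha : a ∈ S) (n : ℕ) : f^[n] a ∈ S := by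
  induction n with
  | zero => simpa using ha
  | succ n ih => rw [Function.iterate_succ_apply']; exact hmap ih

lemma chainInLen_shift {c : ℕ → X} (hmem : ∀ i ≤ k, c i ∈ S)
    (hjump : ∀ i < k, dist (f (c i)) (c (i + 1)) ≤ δ) {i j : ℕ} (hij : i < j) (hj : j ≤ k) :
    ChainInLen f S δ (c i) (c j) (j - i) := by
  refine ⟨by omega, fun t => c (i + t), ?_, by simp, ?_, ?_⟩
  · intro t ht
    exact hmem (i + t) (by omega)
  · show c (i + (j - i)) = c j
    rw [show i + (j - i) = j by omega]
  · intro t ht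
    show dist (f (c (i + t))) (c (i + t + 1)) ≤ δ
    rw [show i + t + 1 = i + (t + 1) by omega] at *
    exact hjump (i + t) (by omega)

lemma chainReach_iff : ChainReach f δ a b ↔ ∃ k, ChainInLen f univ δ a b k := by
  constructor
  · rintro ⟨k, hk, c, h0, hl, hj⟩
    exact ⟨k, hk, c, fun i _ => mem_univ _, h0, hl, hj⟩
  · rintro ⟨k, hk, c, _, h0, hl, hj⟩
    exact ⟨k, hk, c, h0, hl, hj⟩

lemma ChainReach.mono (hδ : δ ≤ δ') (h : ChainReach f δ a b) : ChainReach f δ' a b := by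
  rw [chainReach_iff] at *
  obtain ⟨k, hk⟩ := h
  exact ⟨k, hk.mono hδ⟩

lemma ChainReach.trans' (h1 : ChainReach f δ a b) (h2 : ChainReach f δ b e) :
    ChainReach f δ a e := by
  rw [chainReach_iff] at *
  obtain ⟨k, hk⟩ := h1
  obtain ⟨l, hl⟩ := h2
  exact ⟨k + l, hk.concat hl⟩

lemma ChainTo.trans' (h1 : ChainTo f a b) (h2 : ChainTo f b e) : ChainTo f a e :=
  fun δ hδ => (h1 δ hδ).trans' (h2 δ hδ)

lemma ChainInLen.toReach (h : ChainInLen f S δ a b k) : ChainReach f δ a b := by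
  obtain ⟨hk, c, _, h0, hl, hj⟩ := h
  exact ⟨k, hk, c, h0, hl, hj⟩

lemma ChainInLen.mem_left (h : ChainInLen f S δ a b k) : a ∈ S := by
  obtain ⟨hk, c, hm, h0, hl, hj⟩ := h
  rw [← h0]; exact hm 0 (by omega)

lemma ChainInLen.mem_right (h : ChainInLen f S δ a b k) : b ∈ S := by
  obtain ⟨hk, c, hm, h0, hl, hj⟩ := h
  rw [← hl]; exact hm k le_rfl

end chains

section Cstruct

variable {f : X → X} {C : Set X}

lemma ucont [CompactSpace X] (hf : Continuous f) {ε : ℝ} (hε : 0 < ε) :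
    ∃ η > 0, ∀ u v : X, dist u v ≤ η → dist (f u) (f v) ≤ ε := by
  have := Metric.uniformContinuous_iff.1 (CompactSpace.uniformContinuous_of_continuous hf) ε hε
  obtain ⟨δ, hδ, h⟩ := this
  exact ⟨δ/2, by linarith, fun u v huv => le_of_lt (h (lt_of_le_of_lt huv (by linarith)))⟩

lemma chainRel_of_mem (hC : IsChainComponent f C) {a b : X} (ha : a ∈ C) (hb : b ∈ C) :
    ChainRel f a b := by
  obtain ⟨x₀, hx₀, rfl⟩ := hC
  obtain ⟨haCR, hxa, hax⟩ := ha
  obtain ⟨hbCR, hxb, hbx⟩ := hb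
  exact ⟨hax.trans' hxb, hbx.trans' hxa⟩

lemma mem_C_of (hC : IsChainComponent f C) {a p : X} (ha : a ∈ C) (hp : p ∈ CR f)
    (hap : ChainRel f a p) : p ∈ C := by
  obtain ⟨x₀, hx₀, rfl⟩ := hC
  obtain ⟨haCR, hxa, hax⟩ := ha
  exact ⟨hp, hxa.trans' hap.1, hap.2.trans' hax⟩

lemma mem_CR_of_mem_C (hC : IsChainComponent f C) {a : X} (ha : a ∈ C) : a ∈ CR f := by
  obtain ⟨x₀, hx₀, rfl⟩ := hC
  exact ha.1

lemma reach_orbit1 {δ : ℝ} (hδ : 0 ≤ δ) (a : X) : ChainReach f δ a (f a) := by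
  rw [chainReach_iff]
  exact ⟨1, by simpa using chainInLen_orbit (mapsTo_univ f univ) (mem_univ a) hδ one_pos⟩

lemma ChainReach.adjust_end' {δ η : ℝ} {a b b' : X} (hd : dist b b' ≤ η)
    (h : ChainReach f δ a b) : ChainReach f (δ + η) a b' := by
  rw [chainReach_iff] at *
  obtain ⟨k, hk⟩ := h
  exact ⟨k, hk.adjust_end (mem_univ _) hd⟩

lemma ChainReach.adjust_start' {δ η : ℝ} {a a' b : X} (hd : dist (f a') (f a) ≤ η)
    (h : ChainReach f δ a b) : ChainReach f (δ + η) a' b := by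
  rw [chainReach_iff] at *
  obtain ⟨k, hk⟩ := h
  exact ⟨k, hk.adjust_start (mem_univ _) hd⟩

/-- rotate a cycle one step: chain from `f y` back to `y`. -/
lemma reach_tail {η ε : ℝ} {y : X} (hη : 0 ≤ η)
    (hω : ∀ u v : X, dist u v ≤ η → dist (f u) (f v) ≤ ε)
    (h : ChainReach f η y y) : ChainReach f (ε + η) (f y) y := by
  obtain ⟨k, hk, c, h0, hkk, hj⟩ := h
  rcases Nat.lt_or_ge k 2 with hk2 | hk2
  · have hk1 : k = 1 := by omega
    subst hk1
    have hd : dist (f y) y ≤ η := by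
      have := hj 0 (by omega)
      rwa [h0, hkk] at this
    refine ⟨1, one_pos, fun i => if i = 0 then f y else y, by simp, by simp, ?_⟩
    intro i hi
    have hi0 : i = 0 := by omega
    subst hi0
    simp only [if_true, one_ne_zero, if_false]
    calc dist (f (f y)) y ≤ dist (f (f y)) (f y) + dist (f y) y := dist_triangle _ _ _
      _ ≤ ε + η := add_le_add (hω _ _ hd) hd
  · refine ⟨k - 1, by omega, fun i => if i = 0 then f y else c (i + 1), by simp, ?_, ?_⟩
    · have : k - 1 ≠ 0 := by omega
      simp only [this, if_false]
      rw [show k - 1 + 1 = k by omega, hkk]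
    · intro i hi
      by_cases hi0 : i = 0
      · subst hi0
        have h1 : (1:ℕ) ≠ 0 := by omega
        simp only [if_true, h1, if_false]
        have hd1 : dist (f y) (c 1) ≤ η := by have := hj 0 (by omega); rwa [h0] at this
        calc dist (f (f y)) (c 2)
            ≤ dist (f (f y)) (f (c 1)) + dist (f (c 1)) (c 2) := dist_triangle _ _ _
          _ ≤ ε + η := add_le_add (hω _ _ hd1) (hj 1 (by omega))
      · have hi1 : i + 1 ≠ 0 := by omega
        simp only [hi0, if_false, hi1, if_false]
        have := hj (i + 1) (by omega)
        have hεnn : 0 ≤ ε := le_trans dist_nonneg (hω y y (by simpa using hη))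
        linarith

lemma C_mapsTo [CompactSpace X] (hf : Continuous f) (hC : IsChainComponent f C) :
    MapsTo f C C := by
  intro y hy
  have hyCR : y ∈ CR f := mem_CR_of_mem_C hC hy
  have hfyCR : f y ∈ CR f := by
    intro δ hδ
    obtain ⟨η₀, hη₀, hω⟩ := ucont hf (show (0:ℝ) < δ/2 by linarith)
    set η := min η₀ (δ/2) with hηdef
    have hηpos : 0 < η := lt_min hη₀ (by linarith)
    have h1 : ChainReach f (δ/2 + η) (f y) y :=
      reach_tail hηpos.le
        (fun u v huv => hω u v (huv.trans (min_le_left _ _))) (hyCR η hηpos)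
    have h2 : ChainReach f δ (f y) y := h1.mono (by
      have : η ≤ δ/2 := min_le_right _ _
      linarith)
    have h3 : ChainReach f δ y (f y) := reach_orbit1 (by linarith) y
    exact h2.trans' h3
  have hrel : ChainRel f y (f y) := by
    constructor
    · intro δ hδ; exact reach_orbit1 (by linarith) y
    · intro δ hδ
      obtain ⟨η₀, hη₀, hω⟩ := ucont hf (show (0:ℝ) < δ/2 by linarith)
      set η := min η₀ (δ/2) with hηdef
      have hηpos : 0 < η := lt_min hη₀ (by linarith)
      have h1 : ChainReach f (δ/2 + η) (f y) y :=
        reach_tail hηpos.le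
          (fun u v huv => hω u v (huv.trans (min_le_left _ _))) (hyCR η hηpos)
      exact h1.mono (by have : η ≤ δ/2 := min_le_right _ _; linarith)
  exact mem_C_of hC hy hfyCR hrel

lemma isClosed_C [CompactSpace X] (hf : Continuous f) (hC : IsChainComponent f C) :
    IsClosed C := by
  rw [← isSeqClosed_iff_isClosed]
  intro u y hu hlim
  have key : ∀ δ > 0, ∃ n, ChainReach f δ y (u n) ∧ ChainReach f δ (u n) y := by
    intro δ hδ
    obtain ⟨η₀, hη₀, hω⟩ := ucont hf (show (0:ℝ) < δ/2 by linarith)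
    obtain ⟨N, hN⟩ := Metric.tendsto_atTop.1 hlim (min η₀ (δ/2)) (lt_min hη₀ (by linarith))
    have hn : dist (u N) y < min η₀ (δ/2) := hN N le_rfl
    have hn1 : dist (u N) y ≤ η₀ := le_of_lt (lt_of_lt_of_le hn (min_le_left _ _))
    have hn2 : dist (u N) y ≤ δ/2 := le_of_lt (lt_of_lt_of_le hn (min_le_right _ _))
    have huCR : u N ∈ CR f := mem_CR_of_mem_C hC (hu N)
    have hcyc : ChainReach f (δ/2) (u N) (u N) := huCR (δ/2) (by linarith)
    refine ⟨N, ?_, ?_⟩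
    · have hys : dist (f y) (f (u N)) ≤ δ/2 := hω y (u N) (by rw [dist_comm]; exact hn1)
      have := hcyc.adjust_start' (a' := y) hys
      exact this.mono (by linarith)
    · have := hcyc.adjust_end' (b' := y) hn2
      exact this.mono (by linarith)
  have hyCR : y ∈ CR f := by
    intro δ hδ
    obtain ⟨n, h1, h2⟩ := key δ hδ
    exact h1.trans' h2
  refine mem_C_of hC (hu 0) hyCR ?_
  constructor
  · intro δ hδ
    obtain ⟨n, h1, h2⟩ := key (δ/2) (by linarith)
    have hrel := chainRel_of_mem hC (hu 0) (hu n)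
    exact ((hrel.1 (δ/2) (by linarith)).trans' h2).mono (by linarith)
  · intro δ hδ
    obtain ⟨n, h1, h2⟩ := key (δ/2) (by linarith)
    have hrel := chainRel_of_mem hC (hu n) (hu 0)
    exact (h1.trans' (hrel.1 (δ/2) (by linarith))).mono (by linarith)

end Cstruct

section Ctrans

variable {f : X → X} {C : Set X}

/-- Points on fine cycles through a point of `C` are close to `C`. -/
lemma cycle_points_near [CompactSpace X] (hf : Continuous f) (hC : IsChainComponent f C)
    {a : X} (ha : a ∈ C) {η : ℝ} (hη : 0 < η) :
    ∃ θ > 0, θ ≤ η ∧ ∀ K (c : ℕ → X), 0 < K → c 0 = a → c K = a →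
      (∀ i < K, dist (f (c i)) (c (i + 1)) ≤ θ) → ∀ i ≤ K, infDist (c i) C ≤ η := by
  by_contra hcon
  push_neg at hcon
  have bad : ∀ n : ℕ, ∃ (K : ℕ) (c : ℕ → X) (i : ℕ), 0 < K ∧ c 0 = a ∧ c K = a ∧
      (∀ j < K, dist (f (c j)) (c (j + 1)) ≤ min η (1/(n+1))) ∧ i ≤ K ∧ η < infDist (c i) C := by
    intro n
    have hpos : 0 < min η (1/(n+1)) := lt_min hη (by positivity)
    obtain ⟨K, c, hK, h0, hKa, hj, i, hiK, hbad⟩ :=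
      hcon (min η (1/(n+1))) hpos (min_le_left _ _)
    exact ⟨K, c, i, hK, h0, hKa, hj, hiK, hbad⟩
  choose K c idx hK h0 hKa hj hidx hbad using bad
  set p : ℕ → X := fun n => c n (idx n) with hp
  obtain ⟨q, -, φ, hφmono, hφlim⟩ := isCompact_univ.tendsto_subseq (x := p) (fun n => mem_univ _)
  have hidx0 : ∀ n, idx n ≠ 0 ∧ idx n ≠ K n := by
    intro n
    have hbn := hbad n
    constructor
    · intro h
      rw [h, h0 n, infDist_zero_of_mem ha] at hbn
      linarith
    · intro h
      rw [h, hKa n, infDist_zero_of_mem ha] at hbn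
      linarith
  have hq : ∀ δ > 0, ChainReach f δ a q ∧ ChainReach f δ q a := by
    intro δ hδ
    obtain ⟨η₀, hη₀, hω⟩ := ucont hf (show (0:ℝ) < δ/4 by linarith)
    obtain ⟨N1, hN1⟩ := Metric.tendsto_atTop.1 hφlim (min η₀ (δ/4)) (lt_min hη₀ (by linarith))
    obtain ⟨n₂, hn₂⟩ := exists_nat_one_div_lt (show (0:ℝ) < δ/4 by linarith)
    set m := max N1 n₂ with hm
    have hm1 : dist (p (φ m)) q < min η₀ (δ/4) := hN1 m (le_max_left _ _)
    have hφm : (1:ℝ)/(φ m + 1) ≤ δ/4 := by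
      have hmn : (n₂:ℝ) ≤ (φ m : ℝ) := by
        exact_mod_cast le_trans (le_max_right N1 n₂) hφmono.le_apply
      have h1 : (1:ℝ)/((φ m : ℝ) + 1) ≤ 1/((n₂:ℝ)+1) := by
        apply one_div_le_one_div_of_le (by positivity)
        linarith
      linarith
    set n := φ m with hn
    have hθδ : min η (1/((n:ℝ)+1)) ≤ δ/4 := le_trans (min_le_right _ _) hφm
    have hd1 : dist (p n) q ≤ η₀ := le_of_lt (lt_of_lt_of_le hm1 (min_le_left _ _))
    have hd2 : dist (p n) q ≤ δ/4 := le_of_lt (lt_of_lt_of_le hm1 (min_le_right _ _))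
    have hmemu : ∀ i ≤ K n, c n i ∈ (univ : Set X) := fun _ _ => mem_univ _
    obtain ⟨hi1, hi2⟩ := hidx0 n
    constructor
    · have hchain : ChainInLen f univ (min η (1/(n+1))) (c n 0) (c n (idx n)) (idx n - 0) :=
        chainInLen_shift hmemu (hj n) (Nat.pos_of_ne_zero hi1) (hidx n)
      rw [h0 n] at hchain
      have h3 : ChainReach f (δ/4) a (p n) := (hchain.toReach).mono hθδ
      have h4 := h3.adjust_end' (b' := q) hd2
      exact h4.mono (by linarith)
    · have hchain : ChainInLen f univ (min η (1/(n+1))) (c n (idx n)) (c n (K n)) (K n - idx n) :=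
        chainInLen_shift hmemu (hj n) (lt_of_le_of_ne (hidx n) hi2) le_rfl
      rw [hKa n] at hchain
      have h3 : ChainReach f (δ/4) (p n) a := (hchain.toReach).mono hθδ
      have hqd : dist (f q) (f (p n)) ≤ δ/4 := hω q (p n) (by rw [dist_comm]; exact hd1)
      have h4 := h3.adjust_start' (a' := q) hqd
      exact h4.mono (by linarith)
  have hqC : q ∈ C := by
    refine mem_C_of hC ha ?_ ⟨fun δ hδ => (hq δ hδ).1, fun δ hδ => (hq δ hδ).2⟩
    intro δ hδ
    exact ((hq (δ/2) (by linarith)).2.trans' (hq (δ/2) (by linarith)).1).mono (by linarith)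
  obtain ⟨N, hN⟩ := Metric.tendsto_atTop.1 hφlim η hη
  have hdist : dist (p (φ N)) q < η := hN N le_rfl
  have h1 : infDist (p (φ N)) C ≤ infDist q C + dist (p (φ N)) q := infDist_le_infDist_add_dist
  rw [infDist_zero_of_mem hqC, zero_add] at h1
  exact absurd (hbad (φ N)) (not_lt.2 (h1.trans hdist.le))

/-- `C` is chain transitive with chains inside `C`. -/
lemma chainTransOn [CompactSpace X] (hf : Continuous f) (hC : IsChainComponent f C) :
    ChainTransitiveOn f C := by
  intro a ha b hb δ hδ
  obtain ⟨η₀, hη₀, hω⟩ := ucont hf (show (0:ℝ) < δ/4 by linarith)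
  set η : ℝ := min (δ/8) (η₀/2) with hηdef
  have hηpos : 0 < η := lt_min (by linarith) (by linarith)
  have hη2 : 2 * η ≤ η₀ := by
    have : η ≤ η₀/2 := min_le_right _ _
    linarith
  have hη3 : 2 * η ≤ δ/4 := by
    have : η ≤ δ/8 := min_le_left _ _
    linarith
  obtain ⟨θ, hθpos, hθη, hclaim⟩ := cycle_points_near hf hC ha hηpos
  have hab := chainRel_of_mem hC ha hb
  obtain ⟨K₁, hK₁, c₁, hc₁0, hc₁K, hc₁j⟩ := hab.1 θ hθpos
  obtain ⟨K₂, hK₂, c₂, hc₂0, hc₂K, hc₂j⟩ := hab.2 θ hθpos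
  set c : ℕ → X := fun i => if i ≤ K₁ then c₁ i else c₂ (i - K₁) with hcdef
  have hcc0 : c 0 = a := by simp [hcdef, hc₁0]
  have hccK : c (K₁ + K₂) = a := by
    have h' : ¬ (K₁ + K₂ ≤ K₁) := by omega
    simp only [hcdef, h', if_false]
    rw [show K₁ + K₂ - K₁ = K₂ by omega, hc₂K]
  have hccj : ∀ i < K₁ + K₂, dist (f (c i)) (c (i + 1)) ≤ θ := by
    intro i hi
    by_cases hik : i + 1 ≤ K₁
    · have hik' : i ≤ K₁ := by omega
      simpa [hcdef, hik, hik'] using hc₁j i (by omega)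
    · by_cases hik2 : i ≤ K₁
      · have hik3 : i = K₁ := by omega
        simp only [hcdef, hik2, if_true, hik, if_false]
        have h2 := hc₂j 0 (by omega)
        rw [hc₂0] at h2
        rw [hik3, show K₁ + 1 - K₁ = 1 by omega, hc₁K]
        simpa using h2
      · simp only [hcdef, hik2, if_false, hik, if_false]
        rw [show i + 1 - K₁ = (i - K₁) + 1 by omega]
        exact hc₂j (i - K₁) (by omega)
  have hnear := hclaim (K₁ + K₂) c (by omega) hcc0 hccK hccj
  have hCne : C.Nonempty := ⟨a, ha⟩
  have hsel : ∀ i, ∃ w, w ∈ C ∧ (i ≤ K₁ → dist (c₁ i) w ≤ 2 * η) := by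
    intro i
    by_cases hiK : i ≤ K₁
    · have h1 : infDist (c₁ i) C ≤ η := by
        have := hnear i (by omega)
        rwa [show c i = c₁ i by simp [hcdef, hiK]] at this
      have h2 : infDist (c₁ i) C < 2 * η := lt_of_le_of_lt h1 (by linarith)
      obtain ⟨w, hw, hwdist⟩ := (infDist_lt_iff hCne).1 h2
      exact ⟨w, hw, fun _ => hwdist.le⟩
    · exact ⟨a, ha, fun h => absurd h hiK⟩
  choose w hwC hwd using hsel
  set Q : ℕ → X := fun i => if i = 0 then a else if i = K₁ then b else w i with hQdef
  have hQ0 : Q 0 = a := by simp [hQdef]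
  have hQK : Q K₁ = b := by
    have h' : K₁ ≠ 0 := by omega
    simp [hQdef, h']
  have hQmem : ∀ i ≤ K₁, Q i ∈ C := by
    intro i hi
    by_cases h0' : i = 0
    · rw [h0', hQ0]; exact ha
    · by_cases hK' : i = K₁
      · rw [hK', hQK]; exact hb
      · simp only [hQdef, h0', if_false, hK', if_false]; exact hwC i
  have hQd : ∀ i ≤ K₁, dist (c₁ i) (Q i) ≤ 2 * η := by
    intro i hi
    by_cases h0' : i = 0
    · rw [h0', hQ0, hc₁0, dist_self]; positivity
    · by_cases hK' : i = K₁
      · rw [hK', hQK, hc₁K, dist_self]; positivity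
      · simp only [hQdef, h0', if_false, hK', if_false]
        exact hwd i hi
  refine ⟨K₁, hK₁, Q, hQmem, hQ0, hQK, ?_⟩
  intro i hi
  have hd1 : dist (f (Q i)) (f (c₁ i)) ≤ δ/4 := by
    apply hω
    rw [dist_comm]
    exact (hQd i (by omega)).trans hη2
  have hd2 : dist (f (c₁ i)) (c₁ (i + 1)) ≤ θ := hc₁j i hi
  have hd3 : dist (c₁ (i + 1)) (Q (i + 1)) ≤ 2 * η := hQd (i + 1) (by omega)
  calc dist (f (Q i)) (Q (i + 1))
      ≤ dist (f (Q i)) (f (c₁ i)) + dist (f (c₁ i)) (c₁ (i + 1)) + dist (c₁ (i + 1)) (Q (i + 1)) :=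
        dist_triangle4 _ _ _ _
    _ ≤ δ/4 + θ + 2 * η := by gcongr
    _ ≤ δ := by
        have hθδ : θ ≤ δ/8 := hθη.trans (min_le_left _ _)
        linarith

/-- `f` maps `C` onto `C`. -/
lemma C_surj [CompactSpace X] (hf : Continuous f) (hC : IsChainComponent f C) :
    ∀ y ∈ C, ∃ w ∈ C, f w = y := by
  intro y hy
  have hct := chainTransOn hf hC
  have hsel : ∀ n : ℕ, ∃ w, w ∈ C ∧ dist (f w) y ≤ 1/(n+1) := by
    intro n
    obtain ⟨k, hk, cc, hm, h0, hl, hj⟩ := hct y hy y hy (1/(n+1)) (by positivity)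
    refine ⟨cc (k - 1), hm _ (by omega), ?_⟩
    have := hj (k - 1) (by omega)
    rwa [show k - 1 + 1 = k by omega, hl] at this
  choose w hwC hwd using hsel
  obtain ⟨q, -, φ, hφmono, hφlim⟩ := isCompact_univ.tendsto_subseq (x := w) (fun n => mem_univ _)
  have hqC : q ∈ C := (isClosed_C hf hC).isSeqClosed (fun n => hwC (φ n)) hφlim
  refine ⟨q, hqC, ?_⟩
  have hfd : Tendsto (fun m => f (w (φ m))) atTop (𝓝 (f q)) :=
    (hf.continuousAt.tendsto).comp hφlim
  have hdd : Tendsto (fun m => dist (f (w (φ m))) y) atTop (𝓝 (dist (f q) y)) :=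
    (Continuous.dist continuous_id continuous_const).continuousAt.tendsto.comp hfd
  have hzero : Tendsto (fun m => dist (f (w (φ m))) y) atTop (𝓝 0) := by
    apply squeeze_zero (fun m => dist_nonneg) (fun m => hwd (φ m))
    have h1 : Tendsto (fun n : ℕ => (1:ℝ)/(n+1)) atTop (𝓝 0) := tendsto_one_div_add_atTop_nhds_zero_nat
    exact h1.comp hφmono.tendsto_atTop
  have h0 : dist (f q) y = 0 := tendsto_nhds_unique hdd hzero
  exact dist_eq_zero.1 h0

end Ctrans

section RelLemmas

variable {f : X → X} {C : Set X} {δ δ' η : ℝ} {u v w' : X}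

lemma cycLengths_mono (h : δ ≤ δ') : cycLengths f C δ ⊆ cycLengths f C δ' := by
  rintro l ⟨a, ha, hch⟩
  exact ⟨a, ha, hch.mono h⟩

lemma relCdelta.mono' (h : δ ≤ δ') (hr : relCdelta f C δ u v) : relCdelta f C δ' u v := by
  obtain ⟨k, hdvd, hch⟩ := hr
  exact ⟨k, fun d hd => hdvd d (fun l hl => hd l (cycLengths_mono h hl)), hch.mono h⟩

lemma relCdelta.mem_left' (hr : relCdelta f C δ u v) : u ∈ C := by
  obtain ⟨k, -, hch⟩ := hr; exact hch.mem_left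

lemma relCdelta.mem_right' (hr : relCdelta f C δ u v) : v ∈ C := by
  obtain ⟨k, -, hch⟩ := hr; exact hch.mem_right

lemma relCdelta.trans' (h1 : relCdelta f C δ u v) (h2 : relCdelta f C δ v w') :
    relCdelta f C δ u w' := by
  obtain ⟨k, hk, hck⟩ := h1
  obtain ⟨l, hl, hcl⟩ := h2
  exact ⟨k + l, fun d hd => (hk d hd).add (hl d hd), hck.concat hcl⟩

variable [CompactSpace X]

lemma rel_refl (hf : Continuous f) (hC : IsChainComponent f C) (hδ : 0 < δ) (hu : u ∈ C) :
    relCdelta f C δ u u := by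
  obtain ⟨k, hch⟩ := chainTransOn hf hC u hu u hu δ hδ
  exact ⟨k, fun d hd => hd k ⟨u, hu, hch⟩, hch⟩

lemma rel_symm (hf : Continuous f) (hC : IsChainComponent f C) (hδ : 0 < δ)
    (hr : relCdelta f C δ u v) : relCdelta f C δ v u := by
  obtain ⟨k, hk, hck⟩ := hr
  obtain ⟨r, hcr⟩ := chainTransOn hf hC v hck.mem_right u hck.mem_left δ hδ
  refine ⟨r, fun d hd => ?_, hcr⟩
  have hcyc : k + r ∈ cycLengths f C δ := ⟨u, hck.mem_left, hck.concat hcr⟩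
  have h1 : d ∣ k + r := hd _ hcyc
  have h2 : d ∣ k := hk d hd
  have := Nat.dvd_sub h1 h2
  rwa [show k + r - k = r by omega] at this

lemma rel_step (hf : Continuous f) (hC : IsChainComponent f C) (hδ : 0 < δ)
    (hr : relCdelta f C δ u v) : relCdelta f C δ (f u) (f v) := by
  obtain ⟨k, hk, hck⟩ := hr
  have hu : u ∈ C := hck.mem_left
  have hv : v ∈ C := hck.mem_right
  have hmap := C_mapsTo hf hC
  have hfu : f u ∈ C := hmap hu
  have hfv : f v ∈ C := hmap hv
  have hct := chainTransOn hf hC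
  obtain ⟨r, hcr⟩ := hct (f u) hfu (f v) hfv δ hδ
  obtain ⟨t, hct'⟩ := hct (f v) hfv (f u) hfu δ hδ
  obtain ⟨s, hcs⟩ := hct (f u) hfu u hu δ hδ
  have horb_u : ChainInLen f C δ u (f u) 1 := by
    simpa using chainInLen_orbit hmap hu hδ.le one_pos
  have horb_v : ChainInLen f C δ v (f v) 1 := by
    simpa using chainInLen_orbit hmap hv hδ.le one_pos
  refine ⟨r, fun d hd => ?_, hcr⟩
  have hdk : d ∣ k := hk d hd
  have c1 : d ∣ r + t := hd _ ⟨f u, hfu, hcr.concat hct'⟩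
  have c2 : d ∣ k + (1 + (t + s)) := by
    have := ((hck.concat horb_v).concat hct').concat hcs
    have hmem : k + 1 + t + s ∈ cycLengths f C δ := ⟨u, hu, this⟩
    have := hd _ hmem
    rwa [show k + 1 + t + s = k + (1 + (t + s)) by omega] at this
  have c3 : d ∣ 1 + s := hd _ ⟨u, hu, horb_u.concat hcs⟩
  have c4 : d ∣ 1 + (t + s) := by
    have := Nat.dvd_sub c2 hdk
    rwa [show k + (1 + (t + s)) - k = 1 + (t + s) by omega] at this
  have c5 : d ∣ t := by
    have := Nat.dvd_sub c4 c3
    rwa [show 1 + (t + s) - (1 + s) = t by omega] at this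
  have := Nat.dvd_sub c1 c5
  rwa [show r + t - t = r by omega] at this

lemma rel_step_back (hf : Continuous f) (hC : IsChainComponent f C) (hδ : 0 < δ)
    (hu : u ∈ C) (hv : v ∈ C)
    (hr : relCdelta f C δ (f u) (f v)) : relCdelta f C δ u v := by
  obtain ⟨k, hk, hck⟩ := hr
  have hmap := C_mapsTo hf hC
  have hfu : f u ∈ C := hmap hu
  have hfv : f v ∈ C := hmap hv
  have hct := chainTransOn hf hC
  obtain ⟨r, hcr⟩ := hct u hu v hv δ hδ
  obtain ⟨t, hctv⟩ := hct (f v) hfv v hv δ hδ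
  obtain ⟨s, hcs⟩ := hct v hv u hu δ hδ
  have horb_u : ChainInLen f C δ u (f u) 1 := by
    simpa using chainInLen_orbit hmap hu hδ.le one_pos
  have horb_v : ChainInLen f C δ v (f v) 1 := by
    simpa using chainInLen_orbit hmap hv hδ.le one_pos
  refine ⟨r, fun d hd => ?_, hcr⟩
  have hdk : d ∣ k := hk d hd
  have cA : d ∣ 1 + t := hd _ ⟨v, hv, horb_v.concat hctv⟩
  have cB : d ∣ 1 + k + t + s := by
    have := ((horb_u.concat hck).concat hctv).concat hcs
    exact hd _ ⟨u, hu, this⟩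
  have cB' : d ∣ 1 + t + s := by
    have := Nat.dvd_sub cB hdk
    rwa [show 1 + k + t + s - k = 1 + t + s by omega] at this
  have cS : d ∣ s := by
    have := Nat.dvd_sub cB' cA
    rwa [show 1 + t + s - (1 + t) = s by omega] at this
  have cC : d ∣ r + s := hd _ ⟨u, hu, hcr.concat hcs⟩
  have := Nat.dvd_sub cC cS
  rwa [show r + s - s = r by omega] at this

lemma rel_of_close (hf : Continuous f) (hC : IsChainComponent f C) (hδ : 0 < δ)
    (hu : u ∈ C) (hv : v ∈ C) (hd : dist u v ≤ δ/2) : relCdelta f C δ u v := by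
  obtain ⟨l, hcl⟩ := chainTransOn hf hC u hu u hu (δ/2) (by linarith)
  have hcyc : l ∈ cycLengths f C δ := ⟨u, hu, hcl.mono (by linarith)⟩
  refine ⟨l, fun d hdd => hdd l hcyc, ?_⟩
  have := hcl.adjust_end hv hd
  exact this.mono (by linarith)

lemma rel_adjust_end (hη : 0 ≤ η) (hv' : w' ∈ C) (hd : dist v w' ≤ η)
    (hr : relCdelta f C δ u v) : relCdelta f C (δ + η) u w' := by
  obtain ⟨k, hk, hck⟩ := hr
  exact ⟨k, fun d hd' => hk d (fun l hl => hd' l (cycLengths_mono (by linarith) hl)),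
    hck.adjust_end hv' hd⟩

lemma rel_adjust_start (hη : 0 ≤ η) (hu' : w' ∈ C) (hd : dist (f w') (f u) ≤ η)
    (hr : relCdelta f C δ u v) : relCdelta f C (δ + η) w' v := by
  obtain ⟨k, hk, hck⟩ := hr
  exact ⟨k, fun d hd' => hk d (fun l hl => hd' l (cycLengths_mono (by linarith) hl)),
    hck.adjust_start hu' hd⟩

lemma rel_iterate (hf : Continuous f) (hC : IsChainComponent f C) (hδ : 0 < δ)
    (hr : relCdelta f C δ u v) (n : ℕ) : relCdelta f C δ (f^[n] u) (f^[n] v) := by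
  induction n with
  | zero => simpa using hr
  | succ n ih =>
      rw [Function.iterate_succ_apply', Function.iterate_succ_apply']
      exact rel_step hf hC hδ ih

lemma rel_orbit_times (hf : Continuous f) (hC : IsChainComponent f C) (hδ : 0 < δ)
    (hu : u ∈ C) : ∃ L : ℕ, 0 < L ∧ ∀ v ∈ C, ∀ j : ℕ, 0 < j →
      relCdelta f C δ v (f^[L*j] v) := by
  obtain ⟨L, hcl⟩ := chainTransOn hf hC u hu u hu δ hδ
  have hL : 0 < L := hcl.1
  have hLmem : L ∈ cycLengths f C δ := ⟨u, hu, hcl⟩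
  refine ⟨L, hL, fun v hv j hj => ?_⟩
  refine ⟨L*j, fun d hd => Dvd.dvd.mul_right (hd L hLmem) j, ?_⟩
  exact chainInLen_orbit (C_mapsTo hf hC) hv hδ.le (by positivity)

/-- one-step image identity for δ-classes. -/
lemma image_classCdelta_step (hf : Continuous f) (hC : IsChainComponent f C) (hδ : 0 < δ)
    {a : X} (ha : a ∈ C) :
    f '' classCdelta f C δ a = classCdelta f C δ (f a) := by
  have hmap := C_mapsTo hf hC
  ext y
  constructor
  · rintro ⟨w, ⟨hwC, hwrel⟩, rfl⟩
    exact ⟨hmap hwC, rel_step hf hC hδ hwrel⟩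
  · rintro ⟨hyC, hyrel⟩
    obtain ⟨w, hwC, rfl⟩ := C_surj hf hC y hyC
    exact ⟨w, ⟨hwC, rel_step_back hf hC hδ ha hwC hyrel⟩, rfl⟩

lemma image_classCdelta_iter (hf : Continuous f) (hC : IsChainComponent f C) (hδ : 0 < δ)
    {a : X} (ha : a ∈ C) (n : ℕ) :
    f^[n] '' classCdelta f C δ a = classCdelta f C δ (f^[n] a) := by
  induction n with
  | zero => simp
  | succ n ih =>
      have hmem := iterate_mem_of_mapsTo (C_mapsTo hf hC) ha n
      rw [Function.iterate_succ', Set.image_comp, ih, image_classCdelta_step hf hC hδ hmem]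
      rfl

lemma image_classC_step (hf : Continuous f) (hC : IsChainComponent f C)
    {a : X} (ha : a ∈ C) :
    f '' classC f C a = classC f C (f a) := by
  have hmap := C_mapsTo hf hC
  ext y
  constructor
  · rintro ⟨w, ⟨hwC, hwrel⟩, rfl⟩
    exact ⟨hmap hwC, fun δ hδ => rel_step hf hC hδ (hwrel δ hδ)⟩
  · rintro ⟨hyC, hyrel⟩
    obtain ⟨w, hwC, rfl⟩ := C_surj hf hC y hyC
    exact ⟨w, ⟨hwC, fun δ hδ => rel_step_back hf hC hδ ha hwC (hyrel δ hδ)⟩, rfl⟩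

lemma image_classC_iter (hf : Continuous f) (hC : IsChainComponent f C)
    {a : X} (ha : a ∈ C) (n : ℕ) :
    f^[n] '' classC f C a = classC f C (f^[n] a) := by
  induction n with
  | zero => simp
  | succ n ih =>
      have hmem := iterate_mem_of_mapsTo (C_mapsTo hf hC) ha n
      rw [Function.iterate_succ', Set.image_comp, ih, image_classC_step hf hC hmem]
      rfl

lemma classC_subset_classCdelta (hδ : 0 < δ) {a : X} :
    classC f C a ⊆ classCdelta f C δ a := fun y hy => ⟨hy.1, hy.2 δ hδ⟩

lemma mem_classC_self (hf : Continuous f) (hC : IsChainComponent f C) {a : X} (ha : a ∈ C) :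
    a ∈ classC f C a := ⟨ha, fun δ hδ => rel_refl hf hC hδ ha⟩

lemma mem_classCdelta_self (hf : Continuous f) (hC : IsChainComponent f C) (hδ : 0 < δ)
    {a : X} (ha : a ∈ C) : a ∈ classCdelta f C δ a := ⟨ha, rel_refl hf hC hδ ha⟩

end RelLemmas

section Analysis

lemma tendsto_zero_of_eventually_lt {u : ℕ → ℝ} (hnn : ∀ n, 0 ≤ u n)
    (h : ∀ ε > 0, ∀ᶠ n in atTop, u n < ε) : Tendsto u atTop (𝓝 0) := by
  rw [Metric.tendsto_atTop]
  intro ε hε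
  obtain ⟨N, hN⟩ := (h ε hε).exists_forall_of_atTop
  refine ⟨N, fun n hn => ?_⟩
  rw [Real.dist_eq, sub_zero, abs_of_nonneg (hnn n)]
  exact hN n hn

lemma eventually_lt_of_tendsto_zero {u : ℕ → ℝ} (hlim : Tendsto u atTop (𝓝 0))
    {ε : ℝ} (hε : 0 < ε) : ∀ᶠ n in atTop, u n < ε := by
  obtain ⟨N, hN⟩ := Metric.tendsto_atTop.1 hlim ε hε
  filter_upwards [eventually_ge_atTop N] with n hn
  have := hN n hn
  rw [Real.dist_eq, sub_zero] at this
  exact lt_of_abs_lt this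

lemma liminf_eq_zero_of_frequently {u : ℕ → ℝ} (hnn : ∀ n, 0 ≤ u n) {K : ℝ}
    (hK : ∀ n, u n ≤ K) (hfreq : ∀ ε > 0, ∃ᶠ n in atTop, u n < ε) :
    liminf u atTop = 0 := by
  have hbdd : IsBoundedUnder (· ≥ ·) atTop u := isBoundedUnder_of ⟨0, fun n => hnn n⟩
  have hbdd2 : IsBoundedUnder (· ≤ ·) atTop u := isBoundedUnder_of ⟨K, fun n => hK n⟩
  apply le_antisymm
  · refine le_of_forall_pos_le_add fun ε hε => ?_
    simpa using liminf_le_of_frequently_le ((hfreq ε hε).mono fun n hn => hn.le) hbdd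
  · exact le_liminf_of_le hbdd2.isCoboundedUnder_ge (Eventually.of_forall hnn)

lemma frequently_lt_of_liminf_eq_zero {u : ℕ → ℝ} {K : ℝ}
    (hK : ∀ n, u n ≤ K) (hlim : liminf u atTop = 0) {ε : ℝ} (hε : 0 < ε) :
    ∃ᶠ n in atTop, u n < ε := by
  by_contra hc
  rw [not_frequently] at hc
  have hbdd2 : IsBoundedUnder (· ≤ ·) atTop u := isBoundedUnder_of ⟨K, fun n => hK n⟩
  have : ε ≤ liminf u atTop := by
    refine le_liminf_of_le hbdd2.isCoboundedUnder_ge ?_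
    exact hc.mono fun n hn => not_lt.1 hn
  rw [hlim] at this
  linarith

lemma exists_dist_bound {X : Type*} [MetricSpace X] [CompactSpace X] :
    ∃ K : ℝ, ∀ p q : X, dist p q ≤ K := by
  obtain ⟨K, hK⟩ := Metric.isBounded_iff.1 (isCompact_univ : IsCompact (Set.univ : Set X)).isBounded
  exact ⟨K, fun p q => hK (mem_univ p) (mem_univ q)⟩

end Analysis

section Backward

variable {f : X → X} {C : Set X}

lemma backward_dir [CompactSpace X] (hf : Continuous f) (hC : IsChainComponent f C)
    {x : X} (hx : x ∈ C) {z : X} (hz : z ∈ basin f C)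
    (hlim : liminf (fun i => infDist (f^[i] z) (f^[i] '' classC f C x)) atTop = 0)
    {δ₀ : ℝ} (hδ₀ : 0 < δ₀) :
    Tendsto (fun i => infDist (f^[i] z) (f^[i] '' classCdelta f C δ₀ x)) atTop (𝓝 0) := by
  have hnn : ∀ i : ℕ, (0:ℝ) ≤ infDist (f^[i] z) (f^[i] '' classCdelta f C δ₀ x) :=
    fun i => infDist_nonneg
  refine tendsto_zero_of_eventually_lt hnn ?_
  intro ε hε
  obtain ⟨η₁, hη₁pos, hω⟩ := ucont hf (show (0:ℝ) < δ₀/8 by linarith)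
  set η : ℝ := min (min η₁ (δ₀/8)) (ε/2) with hηdef
  have hηpos : 0 < η := lt_min (lt_min hη₁pos (by linarith)) (by linarith)
  have hηη₁ : η ≤ η₁ := le_trans (min_le_left _ _) (min_le_left _ _)
  have hηδ : η ≤ δ₀/8 := le_trans (min_le_left _ _) (min_le_right _ _)
  have hηε : η ≤ ε/2 := min_le_right _ _
  have hCne : C.Nonempty := ⟨x, hx⟩
  -- basin gives eventual closeness to C
  obtain ⟨I₁, hI₁⟩ := (eventually_lt_of_tendsto_zero hz hηpos).exists_forall_of_atTop
  have hnearC : ∀ i ≥ I₁, ∃ u ∈ C, dist (f^[i] z) u < η := by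
    intro i hi
    exact (infDist_lt_iff hCne).1 (hI₁ i hi)
  -- liminf gives a good starting time
  obtain ⟨K, hK⟩ := exists_dist_bound (X := X)
  have hxD : ∀ i, f^[i] x ∈ f^[i] '' classC f C x :=
    fun i => mem_image_of_mem _ (mem_classC_self hf hC hx)
  have hKb : ∀ i, infDist (f^[i] z) (f^[i] '' classC f C x) ≤ K :=
    fun i => le_trans (infDist_le_dist_of_mem (hxD i)) (hK _ _)
  have hfreq := frequently_lt_of_liminf_eq_zero hKb hlim hηpos
  obtain ⟨i₀, hi₀, hi₀I⟩ := (hfreq.and_eventually (eventually_ge_atTop I₁)).exists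
  -- starting point
  obtain ⟨v₀, hv₀mem, hv₀d⟩ := (infDist_lt_iff (Set.Nonempty.image _ ⟨x, mem_classC_self hf hC hx⟩)).1 hi₀
  obtain ⟨w, hwD, rfl⟩ := hv₀mem
  -- the invariant
  have hmap := C_mapsTo hf hC
  have key : ∀ j : ℕ, ∃ v, relCdelta f C δ₀ (f^[i₀ + j] x) v ∧ dist (f^[i₀ + j] z) v ≤ η := by
    intro j
    induction j with
    | zero =>
        refine ⟨f^[i₀] w, ?_, by simpa using hv₀d.le⟩
        simpa using rel_iterate hf hC hδ₀ (hwD.2 δ₀ hδ₀) i₀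
    | succ j ih =>
        obtain ⟨v, hvrel, hvd⟩ := ih
        have hvC : v ∈ C := hvrel.mem_right'
        have hd1 : dist (f^[i₀ + (j+1)] z) (f v) ≤ δ₀/8 := by
          rw [show i₀ + (j+1) = (i₀ + j) + 1 by omega, Function.iterate_succ_apply']
          exact hω _ _ (hvd.trans hηη₁)
        obtain ⟨u, huC, hud⟩ := hnearC (i₀ + (j+1)) (by omega)
        have hd2 : dist (f v) u ≤ δ₀/2 := by
          have htri : dist (f v) u ≤ dist (f v) (f^[i₀ + (j+1)] z) + dist (f^[i₀ + (j+1)] z) u :=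
            dist_triangle _ _ _
          rw [dist_comm (f v) (f^[i₀ + (j+1)] z)] at htri
          calc dist (f v) u ≤ δ₀/8 + η := htri.trans (add_le_add hd1 hud.le)
            _ ≤ δ₀/2 := by linarith
        have rel1 : relCdelta f C δ₀ (f^[i₀ + (j+1)] x) (f v) := by
          rw [show i₀ + (j+1) = (i₀ + j) + 1 by omega, Function.iterate_succ_apply']
          exact rel_step hf hC hδ₀ hvrel
        have rel2 : relCdelta f C δ₀ (f v) u :=
          rel_of_close hf hC hδ₀ (hmap hvC) huC hd2
        exact ⟨u, rel1.trans' rel2, hud.le⟩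
  -- conclude
  filter_upwards [eventually_ge_atTop i₀] with i hi
  obtain ⟨v, hvrel, hvd⟩ := key (i - i₀)
  rw [show i₀ + (i - i₀) = i by omega] at hvrel hvd
  have hvmem : v ∈ f^[i] '' classCdelta f C δ₀ x := by
    rw [image_classCdelta_iter hf hC hδ₀ hx]
    exact ⟨hvrel.mem_right', hvrel⟩
  calc infDist (f^[i] z) (f^[i] '' classCdelta f C δ₀ x) ≤ dist (f^[i] z) v :=
        infDist_le_dist_of_mem hvmem
    _ ≤ η := hvd
    _ < ε := by linarith

end Backward

section Fort

variable {Q : Type*} [MetricSpace Q] {Y : Type*} [MetricSpace Y] [CompactSpace Y]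

/-- Fort-type lemma: a set-valued map with closed graph into a compact metric space is lower
semicontinuous (relative to a compact set `T`) at some point of `T`. -/
lemma fort_lsc (T : Set Q) (hTcpt : IsCompact T) (hne : T.Nonempty)
    (Φ : Q → Set Y)
    (hgr : ∀ (qs : ℕ → Q) (q : Q) (ys : ℕ → Y) (y : Y),
      Tendsto qs atTop (𝓝 q) → (∀ n, ys n ∈ Φ (qs n)) → Tendsto ys atTop (𝓝 y) → y ∈ Φ q) :
    ∃ qstar ∈ T, ∀ ε > 0, ∃ r > 0, ∀ q' ∈ T, dist q' qstar < r →
      Φ qstar ⊆ thickening ε (Φ q') := by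
  haveI hTcs : CompactSpace T := isCompact_iff_compactSpace.1 hTcpt
  haveI : BaireSpace T := by infer_instance
  obtain ⟨B, hBc, hBbasis⟩ : ∃ B : Set (Set Y), B.Countable ∧
      TopologicalSpace.IsTopologicalBasis B := by
    obtain ⟨B, h1, -, h3⟩ := TopologicalSpace.exists_countable_basis Y
    exact ⟨B, h1, h3⟩
  classical
  set P : Set (Set Y × Set Y) := {p | p.1 ∈ B ∧ p.2 ∈ B ∧ closure p.1 ⊆ p.2} with hP
  have hPc : P.Countable :=
    Set.Countable.mono (fun p (hp : p ∈ P) => Set.mem_prod.2 ⟨hp.1, hp.2.1⟩) (hBc.prod hBc)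
  set G : Set Y × Set Y → Set T := fun p => {t | (Φ ↑t ∩ closure p.1).Nonempty} with hG
  set H : Set Y × Set Y → Set T := fun p => {t | (Φ ↑t ∩ p.2).Nonempty} with hH
  have hGclosed : ∀ p, IsClosed (G p) := by
    intro p
    rw [← isSeqClosed_iff_isClosed]
    intro ts t hts htlim
    choose ys hys1 hys2 using fun n => hts n
    obtain ⟨y, -, φ, hφ, hylim⟩ := isCompact_univ.tendsto_subseq (x := ys) (fun n => mem_univ _)
    refine ⟨y, ?_, ?_⟩
    · refine hgr (fun n => ↑(ts (φ n))) ↑t (fun n => ys (φ n)) y ?_ (fun n => hys1 (φ n)) hylim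
      exact continuous_subtype_val.continuousAt.tendsto.comp (htlim.comp hφ.tendsto_atTop)
    · exact isClosed_closure.isSeqClosed (fun n => hys2 (φ n)) hylim
  have hGH : ∀ p ∈ P, G p ⊆ H p := by
    rintro p ⟨-, -, hcl⟩ t ⟨y, hy1, hy2⟩
    exact ⟨y, hy1, hcl hy2⟩
  have hdense : ∀ p ∈ P, Dense ((G p \ interior (H p))ᶜ) := by
    intro p hp
    rw [← interior_eq_empty_iff_dense_compl]
    by_contra hcon
    obtain ⟨t, ht⟩ := nonempty_iff_ne_empty.2 hcon
    have hsub : interior (G p \ interior (H p)) ⊆ interior (H p) :=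
      interior_mono (fun s hs => hGH p hp hs.1)
    have := hsub ht
    exact (interior_subset ht : _ ∈ G p \ interior (H p)).2 this
  have hopen : ∀ p, IsOpen ((G p \ interior (H p))ᶜ) := by
    intro p
    exact ((hGclosed p).sdiff isOpen_interior).isOpen_compl
  -- Baire category
  have hfam : Dense (⋂ p ∈ P, (G p \ interior (H p))ᶜ) := by
    apply dense_biInter_of_isOpen (fun p _ => hopen p) hPc (fun p hp => hdense p hp)
  obtain ⟨tstar, htstar⟩ : ∃ t : T, ∀ p ∈ P, t ∈ (G p \ interior (H p))ᶜ := by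
    have hne' : Nonempty T := ⟨⟨hne.choose, hne.choose_spec⟩⟩
    obtain ⟨t, ht⟩ := hfam.nonempty
    exact ⟨t, by simpa [Set.mem_iInter₂] using ht⟩
  refine ⟨↑tstar, tstar.2, ?_⟩
  by_contra hcon
  push_neg at hcon
  obtain ⟨ε, hε, hbad⟩ := hcon
  -- bad approximating sequence
  have hseq : ∀ n : ℕ, ∃ q', q' ∈ T ∧ dist q' ↑tstar < 1/(n+1) ∧
      ∃ y ∈ Φ ↑tstar, y ∉ thickening ε (Φ q') := by
    intro n
    obtain ⟨q', hq'T, hq'd, hq'sub⟩ := hbad (1/(n+1)) (by positivity)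
    obtain ⟨y, hy1, hy2⟩ := Set.not_subset.1 hq'sub
    exact ⟨q', hq'T, hq'd, y, hy1, hy2⟩
  choose q' hq'T hq'd ys hys hysfar using hseq
  obtain ⟨ystar, -, φ, hφ, hylim⟩ := isCompact_univ.tendsto_subseq (x := ys) (fun n => mem_univ _)
  have hystar : ystar ∈ Φ ↑tstar :=
    hgr (fun _ => ↑tstar) ↑tstar (fun n => ys (φ n)) ystar tendsto_const_nhds
      (fun n => hys (φ n)) hylim
  -- far from the fibers along the sequence, eventually
  have hfar : ∀ᶠ n in atTop, ∀ w ∈ Φ (q' (φ n)), ε/2 ≤ dist ystar w := by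
    filter_upwards [eventually_lt_of_tendsto_zero
      (tendsto_iff_dist_tendsto_zero.1 hylim) (show (0:ℝ) < ε/2 by linarith)] with n hn w hw
    have h1 : ε ≤ dist (ys (φ n)) w := by
      by_contra hlt
      exact hysfar (φ n) (Metric.mem_thickening_iff.2 ⟨w, hw, by linarith⟩)
    have h2 : dist ystar w ≥ dist (ys (φ n)) w - dist (ys (φ n)) ystar := by
      have := dist_triangle (ys (φ n)) ystar w
      rw [dist_comm ystar w] at *
      linarith [dist_triangle (ys (φ n)) ystar w]
    have : dist (ys (φ n)) ystar < ε/2 := hn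
    linarith
  -- basis pair around ystar
  obtain ⟨V, hVB, hyV, hVsub⟩ := hBbasis.exists_subset_of_mem_open
    (Metric.mem_ball_self (x := ystar) (show (0:ℝ) < ε/4 by linarith)) Metric.isOpen_ball
  obtain ⟨s, hs, hsball⟩ := Metric.isOpen_iff.1 (hBbasis.isOpen hVB) ystar hyV
  obtain ⟨U, hUB, hyU, hUsub⟩ := hBbasis.exists_subset_of_mem_open
    (Metric.mem_ball_self (x := ystar) (show (0:ℝ) < s/2 by linarith)) Metric.isOpen_ball
  have hclU : closure U ⊆ V := by
    refine (closure_mono hUsub).trans ?_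
    refine (Metric.closure_ball_subset_closedBall).trans ?_
    refine (Metric.closedBall_subset_ball (by linarith)).trans hsball
  have hpP : (U, V) ∈ P := ⟨hUB, hVB, hclU⟩
  have hnotbad := htstar (U, V) hpP
  rw [Set.mem_compl_iff, Set.mem_diff, not_and_or, not_not] at hnotbad
  have hGmem : tstar ∈ G (U, V) := ⟨ystar, hystar, subset_closure hyU⟩
  have hint : tstar ∈ interior (H (U, V)) := by
    rcases hnotbad with h | h
    · exact absurd hGmem h
    · exact h
  -- but the sequence q' (φ n) is eventually not in H and converges to tstar
  set ts : ℕ → T := fun n => ⟨q' (φ n), hq'T (φ n)⟩ with hts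
  have htslim : Tendsto ts atTop (𝓝 tstar) := by
    rw [Metric.tendsto_atTop]
    intro r hr
    obtain ⟨N, hN⟩ := exists_nat_one_div_lt hr
    refine ⟨N, fun n hn => ?_⟩
    have h1 : dist (q' (φ n)) ↑tstar < 1/(φ n + 1) := hq'd (φ n)
    have h2 : (1:ℝ)/(φ n + 1) ≤ 1/(N + 1) := by
      apply one_div_le_one_div_of_le (by positivity)
      have : (N:ℝ) ≤ φ n := by exact_mod_cast hn.trans hφ.le_apply
      linarith
    calc dist (ts n) tstar = dist (q' (φ n)) ↑tstar := Subtype.dist_eq _ _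
      _ < 1/(N+1) := lt_of_lt_of_le h1 h2
      _ < r := hN
  have hevH : ∀ᶠ n in atTop, ts n ∈ H (U, V) :=
    htslim.eventually_mem (isOpen_interior.mem_nhds hint) |>.mono
      (fun n hn => interior_subset hn)
  obtain ⟨n, hn1, hn2⟩ := (hevH.and hfar).exists
  obtain ⟨w, hw1, hw2⟩ := hn1
  have hwV : w ∈ Metric.ball ystar (ε/4) := hVsub hw2
  have := hn2 w hw1
  rw [Metric.mem_ball, dist_comm] at hwV
  linarith

end Fort

section Forward

variable [CompactSpace X] (f : X → X) (C : Set X)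

/-- The chain-proximal setoid on `C`. -/
def chainSetoid (hf : Continuous f) (hC : IsChainComponent f C) : Setoid ↥C :=
  { r := fun u v => ∀ δ > 0, relCdelta f C (δ:ℝ) ↑u ↑v
    iseqv := by
      refine ⟨fun u δ hδ => rel_refl hf hC hδ u.2, ?_, ?_⟩
      · intro u v h δ hδ
        exact rel_symm hf hC hδ (h δ hδ)
      · intro u v w h1 h2 δ hδ
        exact (h1 δ hδ).trans' (h2 δ hδ) }

/-- The quotient of `C` by the chain proximal relation, as a bare type (so that no
topological instances are inherited). -/
def QO (hf : Continuous f) (hC : IsChainComponent f C) : Type _ :=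
  Quotient (chainSetoid f C hf hC)

variable {f C}

lemma forward_dir (hf : Continuous f) (hC : IsChainComponent f C)
    {x : X} (hx : x ∈ C) {z : X} (hz : z ∈ basin f C)
    (hVs : ∀ δ > 0, Tendsto (fun i => infDist (f^[i] z) (f^[i] '' classCdelta f C δ x))
      atTop (𝓝 0)) :
    liminf (fun i => infDist (f^[i] z) (f^[i] '' classC f C x)) atTop = 0 := by
  classical
  have hmap := C_mapsTo hf hC
  have hCclosed := isClosed_C hf hC
  set s : Setoid ↥C := chainSetoid f C hf hC with hsdef
  have hsr : ∀ u v : ↥C, s.r u v ↔ ∀ δ > 0, relCdelta f C (δ:ℝ) ↑u ↑v := fun u v => Iff.rfl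
  -- the pseudometric
  set ρ : ↥C → ↥C → ℝ := fun u v => sInf ({d | 0 < d ∧ d ≤ 1 ∧ relCdelta f C d ↑u ↑v} ∪ {1})
    with hρdef
  have hρne : ∀ u v : ↥C, (({d | 0 < d ∧ d ≤ 1 ∧ relCdelta f C d ↑u ↑v} ∪ {1} : Set ℝ)).Nonempty :=
    fun u v => ⟨1, Or.inr rfl⟩
  have hρbdd : ∀ u v : ↥C,
      BddBelow (({d | 0 < d ∧ d ≤ 1 ∧ relCdelta f C d ↑u ↑v} ∪ {1} : Set ℝ)) := by
    intro u v
    refine ⟨0, fun d hd => ?_⟩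
    rcases hd with ⟨h1, -, -⟩ | h
    · exact h1.le
    · simp only [Set.mem_singleton_iff] at h; rw [h]; norm_num
  have hρnonneg : ∀ u v, 0 ≤ ρ u v := fun u v => le_csInf (hρne u v) (fun d hd => by
    rcases hd with ⟨h1, -, -⟩ | h
    · exact h1.le
    · simp only [Set.mem_singleton_iff] at h; rw [h]; norm_num)
  have hρle1 : ∀ u v, ρ u v ≤ 1 := fun u v => csInf_le (hρbdd u v) (Or.inr rfl)
  have hρle : ∀ (u v : ↥C) (δ : ℝ), 0 < δ → relCdelta f C δ ↑u ↑v → ρ u v ≤ δ := by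
    intro u v δ hδ hrel
    rcases le_or_gt δ 1 with h | h
    · exact csInf_le (hρbdd u v) (Or.inl ⟨hδ, h, hrel⟩)
    · exact (hρle1 u v).trans h.le
  have hρrel : ∀ (u v : ↥C) (δ : ℝ), δ ≤ 1 → ρ u v < δ → relCdelta f C δ ↑u ↑v := by
    intro u v δ hδ1 hlt
    obtain ⟨e, he, helt⟩ := exists_lt_of_csInf_lt (hρne u v) hlt
    rcases he with ⟨-, -, hrel⟩ | h
    · exact hrel.mono' helt.le
    · simp only [Set.mem_singleton_iff] at h
      rw [h] at helt
      linarith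
  have hρself : ∀ u, ρ u u = 0 := by
    intro u
    refine le_antisymm ?_ (hρnonneg u u)
    refine le_of_forall_pos_le_add (fun ε hε => ?_)
    simpa using hρle u u ε hε (rel_refl hf hC hε u.2)
  have hρcomm : ∀ u v, ρ u v = ρ v u := by
    have key : ∀ (a b : ↥C), ρ a b ≤ ρ b a := by
      intro a b
      refine le_of_forall_pos_le_add (fun ε hε => ?_)
      rcases lt_or_ge (ρ b a) 1 with h | h
      · have h2 : ρ b a < min 1 (ρ b a + ε) := lt_min h (by linarith)
        have hpos : 0 < min 1 (ρ b a + ε) := lt_of_le_of_lt (hρnonneg b a) h2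
        have hr := hρrel b a _ (min_le_left _ _) h2
        have := hρle a b _ hpos (rel_symm hf hC hpos hr)
        exact this.trans (min_le_right _ _)
      · linarith [hρle1 a b, hρnonneg b a]
    intro u v
    exact le_antisymm (by linarith [key u v, key v u]) (by linarith [key u v, key v u])
  have hρtri : ∀ u v w, ρ u w ≤ ρ u v + ρ v w := by
    intro u v w
    refine le_of_forall_pos_le_add (fun ε hε => ?_)
    rcases le_or_gt 1 (ρ u v + ρ v w) with h | h
    · linarith [hρle1 u w]
    · rcases le_or_gt 1 (ρ u v + ρ v w + ε) with h3 | h3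
      · linarith [hρle1 u w]
      have h1 : ρ u v < ρ u v + ε/2 := by linarith
      have h2 : ρ v w < ρ v w + ε/2 := by linarith
      have hr1 : relCdelta f C (ρ u v + ε/2) ↑u ↑v :=
        hρrel u v _ (by linarith [hρnonneg v w]) h1
      have hr2 : relCdelta f C (ρ v w + ε/2) ↑v ↑w :=
        hρrel v w _ (by linarith [hρnonneg u v]) h2
      have hfin : relCdelta f C (ρ u v + ρ v w + ε) ↑u ↑w :=
        (hr1.mono' (by linarith [hρnonneg v w])).trans' (hr2.mono' (by linarith [hρnonneg u v]))
      exact hρle u w _ (by linarith [hρnonneg u v, hρnonneg v w]) hfin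
  have hρwd : ∀ (a₁ a₂ b₁ b₂ : ↥C), s.r a₁ b₁ → s.r a₂ b₂ → ρ a₁ a₂ = ρ b₁ b₂ := by
    intro a₁ a₂ b₁ b₂ h1 h2
    have hrel : ∀ (p q p' q' : ↥C), s.r p p' → s.r q q' → ∀ d : ℝ, 0 < d →
        relCdelta f C d ↑p ↑q → relCdelta f C d ↑p' ↑q' := by
      intro p q p' q' hp hq d hd hr
      exact ((rel_symm hf hC hd (hp d hd)).trans' hr).trans' (hq d hd)
    have hsets : ({d | 0 < d ∧ d ≤ 1 ∧ relCdelta f C d ↑a₁ ↑a₂} ∪ {1} : Set ℝ) =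
        ({d | 0 < d ∧ d ≤ 1 ∧ relCdelta f C d ↑b₁ ↑b₂} ∪ {1}) := by
      ext d
      constructor
      · rintro (⟨hd1, hd2, hd3⟩ | h)
        · exact Or.inl ⟨hd1, hd2, hrel a₁ a₂ b₁ b₂ h1 h2 d hd1 hd3⟩
        · exact Or.inr h
      · rintro (⟨hd1, hd2, hd3⟩ | h)
        · exact Or.inl ⟨hd1, hd2, hrel b₁ b₂ a₁ a₂ (s.iseqv.symm h1) (s.iseqv.symm h2) d hd1 hd3⟩
        · exact Or.inr h
    simp only [hρdef, hsets]
  have hρeq : ∀ u v, ρ u v = 0 → s.r u v := by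
    intro u v h δ hδ
    rcases le_or_gt δ 1 with hδ1 | hδ1
    · exact hρrel u v δ hδ1 (h ▸ hδ)
    · exact (hρrel u v 1 le_rfl (h ▸ one_pos)).mono' hδ1.le
  -- the quotient metric space
  let Q : Type _ := QO f C hf hC
  let mk : ↥C → Q := Quotient.mk s
  letI instQ : MetricSpace Q := {
    dist := Quotient.lift₂ ρ (fun a₁ a₂ b₁ b₂ h1 h2 => hρwd a₁ a₂ b₁ b₂ h1 h2)
    dist_self := fun q => Quotient.inductionOn q (fun u => hρself u)
    dist_comm := fun q q' => Quotient.inductionOn₂ q q' (fun u v => hρcomm u v)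
    dist_triangle := fun q q' q'' => Quotient.inductionOn₃ q q' q'' (fun u v w => hρtri u v w)
    eq_of_dist_eq_zero := fun {q q'} h => by
      induction q using Quotient.inductionOn
      induction q' using Quotient.inductionOn
      exact Quotient.sound (hρeq _ _ h) }
  have hdistQ : ∀ u v : ↥C, dist (mk u) (mk v) = ρ u v := fun u v => rfl
  -- continuity of the projection and compactness of Q
  have hρlip : ∀ u v : ↥C, ρ u v ≤ 2 * dist (u : X) ↑v := by
    intro u v
    rcases eq_or_lt_of_le (dist_nonneg : (0:ℝ) ≤ dist (u:X) ↑v) with h | h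
    · have huv : (u:X) = ↑v := by rw [← dist_eq_zero]; exact h.symm ▸ rfl
      have huv' : u = v := Subtype.ext huv
      rw [huv', hρself]
      positivity
    · refine hρle u v _ (by linarith) ?_
      exact rel_of_close hf hC (by linarith) u.2 v.2 (by linarith)
  have hmkcont : Continuous mk := by
    apply Metric.continuous_iff.2
    intro u ε hε
    refine ⟨ε/4, by linarith, fun v hv => ?_⟩
    have h1 := hρlip v u
    rw [← hdistQ v u] at h1
    have hd : dist (v:X) ↑u < ε/4 := hv
    calc dist (mk v) (mk u) ≤ 2 * dist (v:X) ↑u := h1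
      _ < ε := by linarith
  haveI hCcpt : CompactSpace ↥C := isCompact_iff_compactSpace.1 hCclosed.isCompact
  haveI hQcpt : CompactSpace Q := by
    constructor
    have huniv : (Set.univ : Set Q) = mk '' Set.univ := by
      ext q
      simp only [Set.image_univ, Set.mem_univ, true_iff]
      obtain ⟨u, hu⟩ := Quotient.exists_rep q
      exact ⟨u, hu⟩
    rw [huniv]
    exact isCompact_univ.image hmkcont
  -- the orbit in Q
  have hox : ∀ i : ℕ, f^[i] x ∈ C := fun i => iterate_mem_of_mapsTo hmap hx i
  set ox : ℕ → ↥C := fun i => ⟨f^[i] x, hox i⟩ with hoxdef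
  set oq : ℕ → Q := fun i => mk (ox i) with hoqdef
  set T : Set Q := closure (Set.range oq) with hTdef
  have hTcpt : IsCompact T := isClosed_closure.isCompact
  have hTne : T.Nonempty := ⟨oq 0, subset_closure (mem_range_self 0)⟩
  -- arithmetic recurrence: late returns of the orbit near every point of T
  have htail : ∀ q ∈ T, ∀ N : ℕ, ∀ ε > 0, ∃ i ≥ N, dist (oq i) q < ε := by
    intro q hq N ε hε
    obtain ⟨p, ⟨i₀, rfl⟩, hpd⟩ := Metric.mem_closure_iff.1 hq (ε/2) (by linarith)
    set δ' : ℝ := min (ε/4) 1 with hδ'def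
    have hδ'pos : 0 < δ' := lt_min (by linarith) one_pos
    obtain ⟨L, hL, hrelL⟩ := rel_orbit_times hf hC hδ'pos hx
    set j := N + 1 with hjdef
    have hiN : L * j + i₀ ≥ N := by
      have : L * j ≥ j := Nat.le_mul_of_pos_left j hL
      omega
    refine ⟨L * j + i₀, hiN, ?_⟩
    have hr : relCdelta f C δ' (f^[i₀] x) (f^[L*j] (f^[i₀] x)) :=
      hrelL (f^[i₀] x) (hox i₀) j (by omega)
    have heq : f^[L*j] (f^[i₀] x) = f^[L*j + i₀] x := (Function.iterate_add_apply f (L*j) i₀ x).symm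
    rw [heq] at hr
    have hd1 : dist (oq (L*j + i₀)) (oq i₀) ≤ δ' := by
      rw [hoqdef]
      simp only
      rw [hdistQ]
      exact hρle _ _ δ' hδ'pos (rel_symm hf hC hδ'pos hr)
    calc dist (oq (L*j+i₀)) q ≤ dist (oq (L*j+i₀)) (oq i₀) + dist (oq i₀) q := dist_triangle _ _ _
      _ < ε := by
          have hb2 : dist (oq i₀) q < ε/2 := by rw [dist_comm]; exact hpd
          have hb1 : δ' ≤ ε/4 := min_le_left _ _
          linarith
  -- the fiber map on Q
  have hΦwd : ∀ a b : ↥C, s.r a b → classC f C ↑a = classC f C ↑b := by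
    intro a b hab
    ext y
    constructor
    · rintro ⟨hyC, hyrel⟩
      exact ⟨hyC, fun δ hδ => (rel_symm hf hC hδ (hab δ hδ)).trans' (hyrel δ hδ)⟩
    · rintro ⟨hyC, hyrel⟩
      exact ⟨hyC, fun δ hδ => (hab δ hδ).trans' (hyrel δ hδ)⟩
  set Φ : Q → Set X := Quotient.lift (fun u : ↥C => classC f C ↑u) hΦwd with hΦdef
  have hΦmk : ∀ u : ↥C, Φ (mk u) = classC f C ↑u := fun u => rfl
  -- closed graph property
  have hgr : ∀ (qs : ℕ → Q) (q : Q) (ys : ℕ → X) (y : X),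
      Tendsto qs atTop (𝓝 q) → (∀ n, ys n ∈ Φ (qs n)) → Tendsto ys atTop (𝓝 y) → y ∈ Φ q := by
    intro qs q ys y hqs hys hyt
    obtain ⟨w, rfl⟩ := Quotient.exists_rep q
    choose un hun using fun n => Quotient.exists_rep (qs n)
    have hys' : ∀ n, ys n ∈ classC f C ↑(un n) := by
      intro n
      have := hys n
      rw [← hun n] at this
      exact this
    have hysC : ∀ n, ys n ∈ C := fun n => (hys' n).1
    have hyC : y ∈ C := hCclosed.isSeqClosed hysC hyt
    refine ⟨hyC, fun δ hδ => ?_⟩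
    have hev1 : ∀ᶠ n in atTop, dist (qs n) (Quotient.mk s w) < min (δ/4) 1 := by
      obtain ⟨N, hN⟩ := Metric.tendsto_atTop.1 hqs (min (δ/4) 1) (lt_min (by linarith) one_pos)
      exact eventually_atTop.2 ⟨N, hN⟩
    have hev2 : ∀ᶠ n in atTop, dist (ys n) y < δ/2 := by
      obtain ⟨N, hN⟩ := Metric.tendsto_atTop.1 hyt (δ/2) (show (0:ℝ) < δ/2 by linarith)
      exact eventually_atTop.2 ⟨N, hN⟩
    obtain ⟨n, hn1, hn2⟩ := (hev1.and hev2).exists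
    have hd : ρ (un n) w < min (δ/4) 1 := by
      rw [← hdistQ (un n) w]
      have : mk (un n) = qs n := hun n
      rw [this]
      exact hn1
    have hrel1 : relCdelta f C (min (δ/4) 1) ↑(un n) ↑w := hρrel _ _ _ (min_le_right _ _) hd
    have hrel1' : relCdelta f C (δ/4) ↑w ↑(un n) := by
      have hpos : (0:ℝ) < min (δ/4) 1 := lt_min (by linarith) one_pos
      exact (rel_symm hf hC hpos hrel1).mono' (min_le_left _ _)
    have hrel2 : relCdelta f C (δ/4) ↑(un n) (ys n) := (hys' n).2 (δ/4) (by linarith)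
    have hrel3 : relCdelta f C (δ/4) ↑w (ys n) := hrel1'.trans' hrel2
    have hrel4 : relCdelta f C (δ/4 + δ/2) ↑w y :=
      rel_adjust_end (by linarith) hyC hn2.le hrel3
    exact hrel4.mono' (by linarith)
  -- Fort's lemma: lower semicontinuity point
  obtain ⟨qstar, hqstarT, hlsc⟩ := fort_lsc T hTcpt hTne Φ hgr
  -- upper semicontinuity at qstar
  have husc : ∀ ε > 0, ∃ r > 0, ∀ u : ↥C, dist (mk u) qstar < r →
      classC f C ↑u ⊆ thickening ε (Φ qstar) := by
    intro ε hε
    by_contra hcon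
    push_neg at hcon
    have hseq : ∀ n : ℕ, ∃ u : ↥C, dist (mk u) qstar < 1/(n+1) ∧
        ∃ y ∈ classC f C ↑u, y ∉ thickening ε (Φ qstar) := by
      intro n
      obtain ⟨u, hu1, hu2⟩ := hcon (1/(n+1)) (by positivity)
      obtain ⟨y, hy1, hy2⟩ := Set.not_subset.1 hu2
      exact ⟨u, hu1, y, hy1, hy2⟩
    choose un hund yn hynmem hynfar using hseq
    obtain ⟨y, -, φ, hφ, hylim⟩ := isCompact_univ.tendsto_subseq (x := yn) (fun n => mem_univ _)
    have hqlim : Tendsto (fun n => mk (un (φ n))) atTop (𝓝 qstar) := by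
      rw [Metric.tendsto_atTop]
      intro r hr
      obtain ⟨N, hN⟩ := exists_nat_one_div_lt hr
      refine ⟨N, fun n hn => ?_⟩
      have h1 := hund (φ n)
      have h2 : (1:ℝ)/(φ n + 1) ≤ 1/(N + 1) := by
        apply one_div_le_one_div_of_le (by positivity)
        have : (N:ℝ) ≤ φ n := by exact_mod_cast hn.trans hφ.le_apply
        linarith
      calc dist (mk (un (φ n))) qstar < 1/(φ n + 1) := h1
        _ ≤ 1/(N+1) := h2
        _ < r := hN
    have hymem : y ∈ Φ qstar := by
      refine hgr (fun n => mk (un (φ n))) qstar (fun n => yn (φ n)) y hqlim ?_ hylim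
      intro n
      rw [hΦmk]
      exact hynmem (φ n)
    obtain ⟨n, hn⟩ := (eventually_lt_of_tendsto_zero
      (tendsto_iff_dist_tendsto_zero.1 hylim) hε).exists
    exact hynfar (φ n) (Metric.mem_thickening_iff.2 ⟨y, hymem, hn⟩)
  -- final assembly
  obtain ⟨K, hK⟩ := exists_dist_bound (X := X)
  have hKb : ∀ i, infDist (f^[i] z) (f^[i] '' classC f C x) ≤ K := fun i =>
    le_trans (infDist_le_dist_of_mem (mem_image_of_mem _ (mem_classC_self hf hC hx))) (hK _ _)
  refine liminf_eq_zero_of_frequently (fun i => infDist_nonneg) hKb ?_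
  intro ε hε
  rw [frequently_atTop]
  intro N
  obtain ⟨r₁, hr₁pos, hr₁⟩ := hlsc (ε/4) (by linarith)
  obtain ⟨r₂, hr₂pos, hr₂⟩ := husc (ε/4) (by linarith)
  set r : ℝ := min (min r₁ r₂) 1 with hrdef
  have hrpos : 0 < r := lt_min (lt_min hr₁pos hr₂pos) one_pos
  have hrr₁ : r ≤ r₁ := le_trans (min_le_left _ _) (min_le_left _ _)
  have hrr₂ : r ≤ r₂ := le_trans (min_le_left _ _) (min_le_right _ _)
  set δ : ℝ := r/4 with hδdef
  have hδpos : 0 < δ := by positivity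
  have hmin : (0:ℝ) < min δ (ε/4) := lt_min hδpos (by linarith)
  obtain ⟨I, hI⟩ := (eventually_lt_of_tendsto_zero (hVs δ hδpos) hmin).exists_forall_of_atTop
  obtain ⟨i, hiN, hid⟩ := htail qstar hqstarT (max N I) (r/2) (by positivity)
  have hiN' : i ≥ N := le_trans (le_max_left _ _) hiN
  have hiI : i ≥ I := le_trans (le_max_right _ _) hiN
  -- a tracked point
  have hiD : infDist (f^[i] z) (f^[i] '' classCdelta f C δ x) < min δ (ε/4) := hI i hiI
  have hne' : (f^[i] '' classCdelta f C δ x).Nonempty :=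
    ⟨f^[i] x, mem_image_of_mem _ (mem_classCdelta_self hf hC hδpos hx)⟩
  obtain ⟨yi, hyimem, hyid⟩ := (infDist_lt_iff hne').1 hiD
  rw [image_classCdelta_iter hf hC hδpos hx] at hyimem
  obtain ⟨hyiC, hyirel⟩ := hyimem
  set yi' : ↥C := ⟨yi, hyiC⟩ with hyi'def
  have hdq1 : dist (mk yi') (oq i) ≤ δ := by
    rw [hoqdef]
    simp only
    rw [hdistQ]
    exact hρle _ _ δ hδpos (rel_symm hf hC hδpos hyirel)
  have hdq2 : dist (mk yi') qstar < r₂ := by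
    calc dist (mk yi') qstar ≤ dist (mk yi') (oq i) + dist (oq i) qstar := dist_triangle _ _ _
      _ < δ + r/2 := by
          have := hid
          linarith [hdq1]
      _ ≤ r := by rw [hδdef]; linarith
      _ ≤ r₂ := hrr₂
  have hsub1 : classC f C yi ⊆ thickening (ε/4) (Φ qstar) := hr₂ yi' hdq2
  obtain ⟨w1, hw1mem, hw1d⟩ := Metric.mem_thickening_iff.1
    (hsub1 (mem_classC_self hf hC hyiC))
  have hsub2 : Φ qstar ⊆ thickening (ε/4) (Φ (oq i)) := by
    refine hr₁ (oq i) (subset_closure (mem_range_self i)) ?_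
    calc dist (oq i) qstar < r/2 := hid
      _ ≤ r₁ := by linarith [hrr₁, hrpos]
  obtain ⟨w2, hw2mem, hw2d⟩ := Metric.mem_thickening_iff.1 (hsub2 hw1mem)
  have hw2' : w2 ∈ f^[i] '' classC f C x := by
    rw [image_classC_iter hf hC hx]
    have : Φ (oq i) = classC f C (f^[i] x) := hΦmk (ox i)
    rwa [this] at hw2mem
  have hfinal : infDist (f^[i] z) (f^[i] '' classC f C x) < ε := by
    calc infDist (f^[i] z) (f^[i] '' classC f C x) ≤ dist (f^[i] z) w2 :=
          infDist_le_dist_of_mem hw2'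
      _ ≤ dist (f^[i] z) yi + dist yi w1 + dist w1 w2 := dist_triangle4 _ _ _ _
      _ < min δ (ε/4) + ε/4 + ε/4 := by
          have := hyid
          linarith [hw1d, hw2d]
      _ ≤ ε := by
          have : min δ (ε/4) ≤ ε/4 := min_le_right _ _
          linarith
  exact ⟨i, hiN', hfinal⟩

end Forward

/-- `V^s(D)` coincides with the set of points of `W^s(C)` whose orbit comes
arbitrarily close to the orbit of `D` infinitely often. -/
theorem stmt11 {X : Type*} [MetricSpace X] [CompactSpace X]
    (f : X → X) (hf : Continuous f) (C : Set X) (hC : IsChainComponent f C)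
    (x : X) (hx : x ∈ C) :
    Vs f C x = {z | z ∈ basin f C ∧
      Filter.liminf (fun i => infDist (f^[i] z) (f^[i] '' classC f C x)) atTop
        = 0} := by
  ext z
  simp only [Vs, Set.mem_setOf_eq]
  constructor
  · rintro ⟨hb, hVs⟩
    exact ⟨hb, forward_dir hf hC hx hb hVs⟩
  · rintro ⟨hb, hlim⟩
    exact ⟨hb, fun δ hδ => backward_dir hf hC hx hb hlim hδ⟩
end

section
/- Let α be irrational, f : S¹ → S¹ the rotation z ↦ z·e^{2πiα}, U = { z ∈ S¹ : Re z < 0 }, and A = { i ∈ ℕ₀ : f^i(1) ∈ U }. Then A belongs to F_iap* (A meets every infinite arithmetic progression ⟨p,m⟩ = {p, p+m, p+2m, …}) but A is not thick. In particular F_iap* \ F_thick ≠ ∅. -/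
/-!
Identify the orbit of `1` with the orbit `i • α` of `0` under the rotation by `α` on `ℝ/ℤ`,
and `U` with an open half of the circle. The forward multiples of any element of a compact group
are dense in the closure of its cyclic subgroup, so the multiples `q • (m • α)` are dense
and hit `U - p • α`. On the other hand some multiple `n • α` is a rotation by an angle in
`(π/2, π)`, and three consecutive rotations by such an angle cannot stay inside a half circle:
among the times `i, i + n, i + 2n` one always lies outside `A`.
-/

open Set Real

theorem exists_add_nsmul_mem_of_denseRange_zsmul {G : Type*} [AddGroup G] [TopologicalSpace G]
    [CompactSpace G] [IsTopologicalAddGroup G] {a : G} (ha : DenseRange (· • a : ℤ → G))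
    (x : G) {U : Set G} (hU : IsOpen U) (hne : U.Nonempty) : ∃ n : ℕ, x + n • a ∈ U := by
  obtain ⟨y, hy⟩ := hne
  exact (denseRange_zsmul_iff_nsmul.1 ha).exists_mem_open (hU.preimage (continuous_const_add x))
    ⟨-x + y, by simpa using hy⟩

section AddCircle

variable {T β : ℝ} [Fact (0 < T)] {U : Set (AddCircle T)}

theorem Irrational.exists_add_nsmul_mem (hβ : Irrational (β / T)) (x : AddCircle T)
    (hU : IsOpen U) (hne : U.Nonempty) : ∃ n : ℕ, x + n • (β : AddCircle T) ∈ U :=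
  exists_add_nsmul_mem_of_denseRange_zsmul (AddCircle.denseRange_zsmul_coe_iff.2 hβ) x hU hne

theorem Irrational.exists_add_mul_nsmul_mem (hβ : Irrational (β / T)) (hU : IsOpen U)
    (hne : U.Nonempty) (p : ℕ) {m : ℕ} (hm : m ≠ 0) :
    ∃ q : ℕ, (p + q * m) • (β : AddCircle T) ∈ U := by
  have hmβ : Irrational ((m * β : ℝ) / T) := by
    rw [mul_div_assoc]
    exact hβ.natCast_mul hm
  simpa only [add_nsmul, mul_nsmul', ← nsmul_eq_mul, AddCircle.coe_nsmul] using
    hmβ.exists_add_nsmul_mem (p • (β : AddCircle T)) hU hne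

end AddCircle

theorem iterate_mul_exp_one (α : ℝ) (i : ℕ) :
    (fun z => z * Complex.exp (2 * π * α * Complex.I))^[i] 1 =
      AddCircle.toCircle (i • (α : AddCircle (1 : ℝ))) := by
  induction i with
  | zero => simp
  | succ n ih =>
    rw [Function.iterate_succ_apply', ih, succ_nsmul, AddCircle.toCircle_add, Circle.coe_mul,
      AddCircle.toCircle_apply_mk, Circle.coe_exp]
    push_cast
    ring_nf

theorem AddCircle.re_toCircle_coe (t : ℝ) :
    (AddCircle.toCircle (t : AddCircle (1 : ℝ)) : ℂ).re = cos (2 * π * t) := by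
  rw [AddCircle.toCircle_apply_mk, Circle.coe_exp, Complex.exp_ofReal_mul_I_re, div_one]

theorem cos_two_pi_mul_nonneg (k : ℤ) {t : ℝ} (h₁ : k - 1 / 4 ≤ t) (h₂ : t ≤ k + 1 / 4) :
    0 ≤ cos (2 * π * t) := by
  rw [← cos_sub_int_mul_two_pi _ k]
  have := pi_pos
  apply cos_nonneg_of_mem_Icc
  constructor <;> nlinarith

theorem cos_two_pi_mul_add_two_mul_nonneg {x u : ℝ} (hx : x ∈ Ico 0 1)
    (hu : u ∈ Ioo (1 / 4) (1 / 2)) (h₀ : cos (2 * π * x) < 0) (h₁ : cos (2 * π * (x + u)) < 0) :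
    0 ≤ cos (2 * π * (x + 2 * u)) := by
  obtain ⟨hx₀, hx₁⟩ := hx
  obtain ⟨hu₀, hu₁⟩ := hu
  have hx_gt : 1 / 4 < x := by
    by_contra! h
    exact h₀.not_ge (cos_two_pi_mul_nonneg 0 (by push_cast; linarith) (by push_cast; linarith))
  have hx_lt : x < 3 / 4 := by
    by_contra! h
    exact h₀.not_ge (cos_two_pi_mul_nonneg 1 (by push_cast; linarith) (by push_cast; linarith))
  have hxu : x + u < 3 / 4 := by
    by_contra! h
    exact h₁.not_ge (cos_two_pi_mul_nonneg 1 (by push_cast; linarith) (by push_cast; linarith))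
  exact cos_two_pi_mul_nonneg 1 (by push_cast; linarith) (by push_cast; linarith)

theorem Irrational.exists_forall_exists_le_two_re_toCircle_nonneg {α : ℝ} (hα : Irrational α) :
    ∃ n : ℕ, ∀ i : ℕ, ∃ k ≤ 2,
      0 ≤ (AddCircle.toCircle ((i + k * n) • (α : AddCircle (1 : ℝ))) : ℂ).re := by
  obtain ⟨n, u, hu, hun⟩ := (show Irrational (α / 1) by rwa [div_one]).exists_add_nsmul_mem 0
    (QuotientAddGroup.isOpenMap_coe _ isOpen_Ioo)
    ⟨((3 / 8 : ℝ) : AddCircle (1 : ℝ)),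
      mem_image_of_mem _ (by norm_num : (3 / 8 : ℝ) ∈ Ioo (1 / 4) (1 / 2))⟩
  rw [zero_add] at hun
  refine ⟨n, fun i => ?_⟩
  set x := Int.fract (i * α)
  have hcoe (k : ℕ) :
      (i + k * n) • (α : AddCircle (1 : ℝ)) = ((x + k * u : ℝ) : AddCircle (1 : ℝ)) := by
    rw [add_nsmul, mul_nsmul', ← hun, AddCircle.coe_add, AddCircle.coe_fract, ← nsmul_eq_mul,
      ← nsmul_eq_mul, AddCircle.coe_nsmul, AddCircle.coe_nsmul]
  simp only [hcoe, AddCircle.re_toCircle_coe]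
  by_contra! hneg
  have hx : x ∈ Ico 0 1 := ⟨Int.fract_nonneg _, Int.fract_lt_one _⟩
  have h₀ : cos (2 * π * x) < 0 := by simpa using hneg 0 (by norm_num)
  have h₁ : cos (2 * π * (x + u)) < 0 := by simpa using hneg 1 (by norm_num)
  have h₂ : cos (2 * π * (x + 2 * u)) < 0 := by exact_mod_cast hneg 2 le_rfl
  exact h₂.not_ge (cos_two_pi_mul_add_two_mul_nonneg hx hu h₀ h₁)

/-- For an irrational rotation of the circle, the set of visit times of `1` to
the open left half `{Re z < 0}` meets every infinite arithmetic progression but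
is not thick. -/
theorem stmt14 (α : ℝ) (hα : Irrational α) (f : ℂ → ℂ)
    (hf : f = fun z => z * Complex.exp (2 * Real.pi * α * Complex.I))
    (A : Set ℕ) (hA : A = {i | (f^[i] 1).re < 0}) :
    (∀ p : ℕ, ∀ m : ℕ, 1 ≤ m → ∃ q : ℕ, p + q * m ∈ A) ∧
    ¬(∀ j : ℕ, 1 ≤ j → ∃ i : ℕ, ∀ l < j, i + l ∈ A) := by
  subst hf hA
  simp only [mem_ofPred_eq, iterate_mul_exp_one]
  refine ⟨fun p m hm => ?_, fun hthick => ?_⟩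
  · have hU : IsOpen {z : AddCircle (1 : ℝ) | (AddCircle.toCircle z : ℂ).re < 0} :=
      isOpen_lt (Complex.continuous_re.comp
        (continuous_subtype_val.comp AddCircle.continuous_toCircle)) continuous_const
    have hhalf : ((1 / 2 : ℝ) : AddCircle (1 : ℝ)) ∈ {z | (AddCircle.toCircle z : ℂ).re < 0} := by
      rw [mem_ofPred_eq, AddCircle.re_toCircle_coe, show 2 * π * (1 / 2) = π by ring, cos_pi]
      norm_num
    exact (show Irrational (α / 1) by rwa [div_one]).exists_add_mul_nsmul_mem hU ⟨_, hhalf⟩ p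
      (by omega)
  · obtain ⟨n, hn⟩ := hα.exists_forall_exists_le_two_re_toCircle_nonneg
    obtain ⟨i, hi⟩ := hthick (2 * n + 1) (by omega)
    obtain ⟨k, hk, hnonneg⟩ := hn i
    exact hnonneg.not_gt (hi (k * n) (by nlinarith))
end

section
/- Let X be a compact metric space, f : X → X continuous, Y ⊆ X nonempty, n ≥ 2, and δ > 0. Then the set { (x_1,…,x_n) ∈ Y^n : S_f(x_1,…,x_n; δ) ∈ F } is a G_δ subset of Y^n for each F ∈ { F_ud1, F_iap*, F_infinite }, and the set ∩_{ε>0} { (x_1,…,x_n) ∈ Y^n : T_f(x_1,…,x_n; ε) ∈ F } is a G_δ subset of Y^n for each F ∈ { F_ud1, F_iap*, F_infinite }. -/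
/-! For a fixed time `i`, membership of `i` in `S_f(x; δ)` or in `T_f(x; ε)` is an open condition
on `x`: a finite conjunction of strict inequalities between continuous functions. Each of the three
families is a countable intersection of countable unions of such conditions: `Finfinite` asks that
`i ∈ A` frequently, `Fud1` that the proportion of `A` below `m` frequently exceeds `1 - 1/(k+1)`
(which only requires finitely many `i ∈ A`), and `FiapStar` is `⋂ p m, ⋃ q`. The families are
upward closed and `T_f(x; ε)` grows with `ε`, so `∀ ε > 0` reduces to `ε = 1 / (k + 1)`. -/

open Filter Topology Metric Set

/-- The upper density of a set of natural numbers. -/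
noncomputable def upperDensity (A : Set ℕ) : ℝ :=
  Filter.limsup (fun n => ((A ∩ Set.Iio n).ncard : ℝ) / n) Filter.atTop

/-- The family of sets of upper density one. -/
def Fud1 : Set (Set ℕ) := {A | upperDensity A = 1}

/-- The family of thick sets. -/
def Fthick : Set (Set ℕ) :=
  {A | ∀ j : ℕ, 1 ≤ j → ∃ i : ℕ, ∀ l < j, i + l ∈ A}

/-- The dual of the family of sets containing an arithmetic progression:
sets meeting every progression `{p, p+m, p+2m, …}` with `m ≥ 1`. -/
def FiapStar : Set (Set ℕ) :=
  {A | ∀ p : ℕ, ∀ m : ℕ, 1 ≤ m → ∃ q : ℕ, p + q * m ∈ A}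

/-- The family of infinite sets. -/
def Finfinite : Set (Set ℕ) := {A | A.Infinite}

/-- `S_f(x₁,…,xₙ; r)` : times at which all pairs are more than `r` apart. -/
def Sset {X : Type*} [MetricSpace X] {n : ℕ} (f : X → X) (x : Fin n → X)
    (r : ℝ) : Set ℕ :=
  {i | ∀ j k : Fin n, j < k → r < dist (f^[i] (x j)) (f^[i] (x k))}

/-- `T_f(x₁,…,xₙ; r)` : times at which all pairs are less than `r` apart. -/
def Tset {X : Type*} [MetricSpace X] {n : ℕ} (f : X → X) (x : Fin n → X)
    (r : ℝ) : Set ℕ :=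
  {i | ∀ j k : Fin n, j < k → dist (f^[i] (x j)) (f^[i] (x k)) < r}

noncomputable def partialDensity (A : Set ℕ) (m : ℕ) : ℝ := ((A ∩ Iio m).ncard : ℝ) / m

lemma partialDensity_nonneg (A : Set ℕ) (m : ℕ) : 0 ≤ partialDensity A m := by
  unfold partialDensity; positivity

lemma partialDensity_le_one (A : Set ℕ) (m : ℕ) : partialDensity A m ≤ 1 := by
  refine div_le_one_of_le₀ ?_ m.cast_nonneg
  calc ((A ∩ Iio m).ncard : ℝ) ≤ (Iio m).ncard := by
        gcongr
        · exact finite_Iio m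
        · exact inter_subset_right
    _ = m := by rw [← Finset.coe_Iio, ncard_coe_finset, Nat.card_Iio]

lemma partialDensity_mono {A B : Set ℕ} (hAB : A ⊆ B) (m : ℕ) :
    partialDensity A m ≤ partialDensity B m := by
  unfold partialDensity
  gcongr
  exact (finite_Iio m).subset inter_subset_right

lemma partialDensity_inter_Iio (A : Set ℕ) (m : ℕ) :
    partialDensity (A ∩ Iio m) m = partialDensity A m := by
  simp only [partialDensity, inter_assoc, inter_self]

lemma upperDensity_eq_one_iff (A : Set ℕ) :
    upperDensity A = 1 ↔
      ∀ k : ℕ, ∃ᶠ m in atTop, 1 - 1 / ((k : ℝ) + 1) < partialDensity A m := by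
  have hle : IsBoundedUnder (· ≤ ·) atTop (partialDensity A) :=
    isBoundedUnder_of ⟨1, partialDensity_le_one A⟩
  have hge : IsBoundedUnder (· ≥ ·) atTop (partialDensity A) :=
    isBoundedUnder_of ⟨0, partialDensity_nonneg A⟩
  have h_le_one : upperDensity A ≤ 1 :=
    limsup_le_of_le hge.isCoboundedUnder_le (.of_forall (partialDensity_le_one A))
  rw [← h_le_one.ge_iff_eq]
  change 1 ≤ limsup (partialDensity A) atTop ↔ _
  rw [le_limsup_iff hge.isCoboundedUnder_le hle]
  refine ⟨fun h k => h _ (by simp; positivity), fun h c hc => ?_⟩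
  obtain ⟨k, hk⟩ := exists_nat_one_div_lt (sub_pos.2 hc)
  exact (h k).mono fun m hm => by linarith

lemma isUpperSet_Fud1 : IsUpperSet Fud1 := by
  intro A B hAB hA
  simp only [Fud1, mem_ofPred_eq, upperDensity_eq_one_iff] at hA ⊢
  exact fun k => (hA k).mono fun m hm => hm.trans_le (partialDensity_mono hAB m)

lemma isUpperSet_FiapStar : IsUpperSet FiapStar := by
  intro A B hAB hA p m hm
  obtain ⟨q, hq⟩ := hA p m hm
  exact ⟨q, hAB hq⟩

lemma isUpperSet_Finfinite : IsUpperSet Finfinite := fun _ _ hAB hA => hA.mono hAB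

def Ffamilies : Set (Set (Set ℕ)) := {Fud1, FiapStar, Finfinite}

lemma isUpperSet_of_mem_Ffamilies {F : Set (Set ℕ)} (hF : F ∈ Ffamilies) : IsUpperSet F := by
  rcases hF with rfl | rfl | rfl
  exacts [isUpperSet_Fud1, isUpperSet_FiapStar, isUpperSet_Finfinite]

lemma mem_Finfinite_iff (A : Set ℕ) : A ∈ Finfinite ↔ ∃ᶠ i in atTop, i ∈ A :=
  Nat.frequently_atTop_iff_infinite.symm

section SetValued

variable {α : Type*} [TopologicalSpace α]

lemma isGδ_setOf_frequently {U : ℕ → Set α} (hU : ∀ m, IsOpen (U m)) :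
    IsGδ {x | ∃ᶠ m in atTop, x ∈ U m} := by
  have : {x | ∃ᶠ m in atTop, x ∈ U m} = ⋂ N, ⋃ m ≥ N, U m := by
    ext x; simp [frequently_atTop]
  rw [this]
  exact .iInter fun N => (isOpen_biUnion fun m _ => hU m).isGδ

lemma isGδ_setOf_forall_pos {P : ℝ → α → Prop} (hP : ∀ ε, IsGδ {x | P ε x})
    (hmono : ∀ x, Monotone (P · x)) : IsGδ {x | ∀ ε > 0, P ε x} := by
  have : {x | ∀ ε > 0, P ε x} = ⋂ k : ℕ, {x | P (1 / ((k : ℝ) + 1)) x} := by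
    ext x
    simp only [mem_ofPred_eq, mem_iInter]
    refine ⟨fun h k => h _ Nat.one_div_pos_of_nat, fun h ε hε => ?_⟩
    obtain ⟨k, hk⟩ := exists_nat_one_div_lt hε
    exact hmono x hk.le (h k)
  rw [this]
  exact .iInter fun k => hP _

variable {A : α → Set ℕ} (hA : ∀ i, IsOpen {x | i ∈ A x})
include hA

lemma isOpen_setOf_lt_partialDensity (c : ℝ) (m : ℕ) :
    IsOpen {x | c < partialDensity (A x) m} := by
  have : {x | c < partialDensity (A x) m} =
      ⋃ (B : Finset ℕ) (_ : c < partialDensity B m), ⋂ i ∈ B, {x | i ∈ A x} := by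
    ext x
    simp only [mem_ofPred_eq, mem_iUnion, mem_iInter]
    constructor
    · intro hx
      have hfin := (finite_Iio m).subset (inter_subset_right (s := A x))
      refine ⟨hfin.toFinset, ?_, fun i hi => (hfin.mem_toFinset.1 hi).1⟩
      rwa [hfin.coe_toFinset, partialDensity_inter_Iio]
    · rintro ⟨B, hB, hBA⟩
      exact hB.trans_le (partialDensity_mono hBA m)
  rw [this]
  exact isOpen_iUnion fun B => isOpen_iUnion fun _ => isOpen_biInter_finset fun i _ => hA i

lemma isGδ_setOf_mem_Fud1 : IsGδ {x | A x ∈ Fud1} := by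
  change IsGδ {x | upperDensity (A x) = 1}
  simp only [upperDensity_eq_one_iff, ofPred_forall]
  exact .iInter fun k => isGδ_setOf_frequently fun m => isOpen_setOf_lt_partialDensity hA _ m

lemma isGδ_setOf_mem_FiapStar : IsGδ {x | A x ∈ FiapStar} := by
  change IsGδ {x | ∀ p m, 1 ≤ m → ∃ q, p + q * m ∈ A x}
  simp only [ofPred_forall, ofPred_exists]
  exact .iInter fun p => .iInter fun m => .iInter fun _ => (isOpen_iUnion fun q => hA _).isGδ

lemma isGδ_setOf_mem_Finfinite : IsGδ {x | A x ∈ Finfinite} := by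
  simp only [mem_Finfinite_iff]
  exact isGδ_setOf_frequently hA

lemma isGδ_setOf_mem_of_mem_Ffamilies {F : Set (Set ℕ)} (hF : F ∈ Ffamilies) :
    IsGδ {x | A x ∈ F} := by
  rcases hF with rfl | rfl | rfl
  exacts [isGδ_setOf_mem_Fud1 hA, isGδ_setOf_mem_FiapStar hA, isGδ_setOf_mem_Finfinite hA]

end SetValued

section Dynamics

variable {X : Type*} [MetricSpace X] {f : X → X} {n : ℕ}

lemma isOpen_setOf_mem_Sset (hf : Continuous f) (r : ℝ) (i : ℕ) :
    IsOpen {x : Fin n → X | i ∈ Sset f x r} := by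
  change IsOpen {x : Fin n → X | ∀ j k, j < k → r < dist (f^[i] (x j)) (f^[i] (x k))}
  simp only [ofPred_forall]
  exact isOpen_iInter_of_finite fun j => isOpen_iInter_of_finite fun k =>
    isOpen_iInter_of_finite fun _ => isOpen_lt continuous_const (by fun_prop)

lemma isOpen_setOf_mem_Tset (hf : Continuous f) (r : ℝ) (i : ℕ) :
    IsOpen {x : Fin n → X | i ∈ Tset f x r} := by
  change IsOpen {x : Fin n → X | ∀ j k, j < k → dist (f^[i] (x j)) (f^[i] (x k)) < r}
  simp only [ofPred_forall]
  exact isOpen_iInter_of_finite fun j => isOpen_iInter_of_finite fun k =>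
    isOpen_iInter_of_finite fun _ => isOpen_lt (by fun_prop) continuous_const

lemma monotone_mem_Tset {F : Set (Set ℕ)} (hF : IsUpperSet F) (x : Fin n → X) :
    Monotone fun ε => Tset f x ε ∈ F :=
  fun _ _ hεε' hx => hF (fun _ hi j k hjk => (hi j k hjk).trans_le hεε') hx

end Dynamics

theorem stmt15_general {X : Type*} [MetricSpace X]
    (f : X → X) (hf : Continuous f) (Y : Set X)
    (n : ℕ) (δ : ℝ) :
    ∀ F ∈ ({Fud1, FiapStar, Finfinite} : Set (Set (Set ℕ))),
      IsGδ {x : Fin n → Y | Sset f (fun j => (x j : X)) δ ∈ F} ∧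
      IsGδ {x : Fin n → Y | ∀ ε > 0, Tset f (fun j => (x j : X)) ε ∈ F} := by
  intro F hF
  have hval : Continuous fun (x : Fin n → Y) j => (x j : X) := by fun_prop
  have hS i := (isOpen_setOf_mem_Sset hf δ i).preimage hval
  have hT ε i := (isOpen_setOf_mem_Tset hf ε i).preimage hval
  exact ⟨isGδ_setOf_mem_of_mem_Ffamilies hS hF,
    isGδ_setOf_forall_pos (fun ε => isGδ_setOf_mem_of_mem_Ffamilies (hT ε) hF)
      fun x => monotone_mem_Tset (isUpperSet_of_mem_Ffamilies hF) _⟩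

/-- For each of the families `F_ud1`, `F_iap*`, `F_infinite`, the corresponding
sets of tuples form Gδ subsets of `Yⁿ`. -/
theorem stmt15 {X : Type*} [MetricSpace X] [CompactSpace X]
    (f : X → X) (hf : Continuous f) (Y : Set X) (hY : Y.Nonempty)
    (n : ℕ) (hn : 2 ≤ n) (δ : ℝ) (hδ : 0 < δ) :
    ∀ F ∈ ({Fud1, FiapStar, Finfinite} : Set (Set (Set ℕ))),
      IsGδ {x : Fin n → Y | Sset f (fun j => (x j : X)) δ ∈ F} ∧
      IsGδ {x : Fin n → Y | ∀ ε > 0, Tset f (fun j => (x j : X)) ε ∈ F} :=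
  stmt15_general f hf Y n δ
end
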